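/- arXiv:2305.15522 — 9 statements merged into one kernel-verified Lean document; each statement's English description precedes it below -/
import Mathlib

section
/- Let W be a finite-dimensional complex vector space and let g : [0,∞) → L(W) be a semigroup. Then there exists a decomposition W = V_1 ⊕ ⋯ ⊕ V_n with dim V_i ≥ 1 such that for each i and every x ≥ 0 the subspace V_i is invariant under g(x), and the restriction of g(x) to V_i has exactly one eigenvalue λ_i(x) ∈ ℂ (i.e. the characteristic polynomial of g(x)|V_i is (X − λ_i(x))^{dim V_i}). -/
/-!
The maps `g x`, `x ≥ 0`, commute, since `g x ∘ g y = g (x + y) = g y ∘ g x`. Over `ℂ` a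
commuting family of endomorphisms splits the space into its joint generalised eigenspaces
`⨅ x, maxGenEigenspace (g x) (χ x)`; only finitely many of them are nonzero, each is invariant
under every `g x`, and on it `g x - χ x` is nilpotent, so `g x` has the single eigenvalue `χ x`.
-/

open Polynomial Module

namespace DirectSum.IsInternal

variable {ι R M : Type*} [DecidableEq ι] [Ring R] [AddCommGroup M] [Module R M] [IsNoetherian R M]

theorem exists_fin_reindex_ne_bot {A : ι → Submodule R M} (h : IsInternal A) :
    ∃ (n : ℕ) (e : Fin n → ι), IsInternal (A ∘ e) ∧ ∀ k, A (e k) ≠ ⊥ := by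
  have hfin : {i | A i ≠ ⊥}.Finite :=
    WellFoundedGT.finite_ne_bot_of_iSupIndep h.submodule_iSupIndep
  let e : Fin hfin.toFinset.card ≃ {i // A i ≠ ⊥} :=
    hfin.toFinset.equivFin.symm.trans (Equiv.subtypeEquivRight fun _ => hfin.mem_toFinset)
  refine ⟨_, fun k => (e k).1, ?_, fun k => (e k).2⟩
  obtain ⟨hindep, htop⟩ :=
    (isInternal_submodule_iff_iSupIndep_and_iSup_eq_top _).1 (isInternal_ne_bot_iff.2 h)
  exact (isInternal_submodule_iff_iSupIndep_and_iSup_eq_top _).2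
    ⟨hindep.comp e.injective, (e.iSup_comp (g := fun i : {i // A i ≠ ⊥} => A i)).trans htop⟩

end DirectSum.IsInternal

namespace Module.End

theorem charpoly_eq_X_sub_C_pow_of_isNilpotent_sub_smul {R M : Type*} [CommRing R] [IsDomain R]
    [AddCommGroup M] [Module R M] [Module.Finite R M] [Module.Free R M] {f : End R M} {μ : R}
    (h : IsNilpotent (f - μ • 1)) :
    f.charpoly = (X - C μ) ^ finrank R M := by
  have hcomp : f.charpoly.comp (X + C μ) = X ^ finrank R M := by
    rw [← LinearMap.charpoly_sub_smul]
    exact h.charpoly_eq_X_pow_finrank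
  calc f.charpoly = (f.charpoly.comp (X + C μ)).comp (X - C μ) := by
        simp [comp_assoc]
    _ = (X - C μ) ^ finrank R M := by rw [hcomp, X_pow_comp]

section JointEigenspace

variable {ι K M : Type*} [Field K] [AddCommGroup M] [Module K M] (f : ι → End K M)
  (hf : ∀ i j φ, Set.MapsTo (f i) ((f j).maxGenEigenspace φ) ((f j).maxGenEigenspace φ))

include hf

theorem mapsTo_iInf_maxGenEigenspace (χ : ι → K) (j : ι) :
    Set.MapsTo (f j) (⨅ i, (f i).maxGenEigenspace (χ i) : Submodule K M)
      (⨅ i, (f i).maxGenEigenspace (χ i) : Submodule K M) := by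
  intro v hv
  simp only [SetLike.mem_coe, Submodule.mem_iInf] at hv ⊢
  exact fun i => hf j i (χ i) (hv i)

variable [FiniteDimensional K M]

theorem isNilpotent_restrict_iInf_maxGenEigenspace_sub_smul (χ : ι → K) (j : ι) :
    IsNilpotent ((f j).restrict (mapsTo_iInf_maxGenEigenspace f hf χ j) - χ j • 1) := by
  have hsub : (f j).restrict (mapsTo_iInf_maxGenEigenspace f hf χ j) - χ j • 1 =
      (f j - algebraMap K (End K M) (χ j)).restrict fun v hv => Submodule.sub_mem _
        (mapsTo_iInf_maxGenEigenspace f hf χ j hv) (Submodule.smul_mem _ _ hv) := by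
    ext; rfl
  rw [hsub]
  exact isNilpotent_restrict_of_le (iInf_le _ j)
    (isNilpotent_restrict_maxGenEigenspace_sub_algebraMap (f j) (χ j))

theorem charpoly_restrict_iInf_maxGenEigenspace (χ : ι → K) (j : ι) :
    ((f j).restrict (mapsTo_iInf_maxGenEigenspace f hf χ j)).charpoly =
      (X - C (χ j)) ^ finrank K (⨅ i, (f i).maxGenEigenspace (χ i) : Submodule K M) :=
  charpoly_eq_X_sub_C_pow_of_isNilpotent_sub_smul
    (isNilpotent_restrict_iInf_maxGenEigenspace_sub_smul f hf χ j)

theorem exists_isInternal_charpoly_restrict_eq_X_sub_C_pow [IsAlgClosed K] :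
    ∃ (n : ℕ) (U : Fin n → Submodule K M), DirectSum.IsInternal U ∧ (∀ k, U k ≠ ⊥) ∧
      ∃ hU : ∀ k i, Set.MapsTo (f i) (U k) (U k), ∀ k, ∃ χ : ι → K, ∀ i,
        ((f i).restrict (hU k i)).charpoly = (X - C (χ i)) ^ finrank K (U k) := by
  classical
  have hinternal : DirectSum.IsInternal fun χ : ι → K => ⨅ i, (f i).maxGenEigenspace (χ i) :=
    (DirectSum.isInternal_submodule_iff_iSupIndep_and_iSup_eq_top _).2
      ⟨independent_iInf_maxGenEigenspace_of_forall_mapsTo f hf,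
        iSup_iInf_maxGenEigenspace_eq_top_of_forall_mapsTo f hf
          fun i => iSup_maxGenEigenspace_eq_top (f i)⟩
  obtain ⟨n, e, he, hne⟩ := hinternal.exists_fin_reindex_ne_bot
  exact ⟨n, _, he, hne, fun k => mapsTo_iInf_maxGenEigenspace f hf (e k),
    fun k => ⟨e k, charpoly_restrict_iInf_maxGenEigenspace f hf (e k)⟩⟩

end JointEigenspace

end Module.End

theorem complex_primary_decomposition_general
    {W : Type*} [AddCommGroup W] [Module ℂ W] [FiniteDimensional ℂ W]
    (g : ℝ → W →ₗ[ℂ] W)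
    (hgadd : ∀ x y : ℝ, 0 ≤ x → 0 ≤ y → g (x + y) = g x ∘ₗ g y) :
    ∃ (n : ℕ) (V : Fin n → Submodule ℂ W),
      DirectSum.IsInternal V ∧
      (∀ i, 1 ≤ Module.finrank ℂ (V i)) ∧
      ∃ hinv : ∀ (i : Fin n) (x : ℝ), 0 ≤ x → ∀ v ∈ V i, g x v ∈ V i,
        ∀ i : Fin n, ∃ lam : ℝ → ℂ,
          ∀ (x : ℝ) (hx : 0 ≤ x),
            ((g x).restrict (hinv i x hx)).charpoly
              = (X - C (lam x)) ^ Module.finrank ℂ (V i) := by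
  have hcomm (x y : {x : ℝ // 0 ≤ x}) : Commute (g x) (g y) := by
    rw [commute_iff_eq, Module.End.mul_eq_comp, Module.End.mul_eq_comp, ← hgadd _ _ x.2 y.2,
      ← hgadd _ _ y.2 x.2, add_comm]
  obtain ⟨n, V, hV, hne, hinv, hχ⟩ :=
    Module.End.exists_isInternal_charpoly_restrict_eq_X_sub_C_pow
      (fun x : {x : ℝ // 0 ≤ x} => g x)
      fun x y φ => Module.End.mapsTo_maxGenEigenspace_of_comm (hcomm y x) φ
  refine ⟨n, V, hV, fun k => Submodule.one_le_finrank_iff.2 (hne k),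
    fun k x hx => hinv k ⟨x, hx⟩, fun k => ?_⟩
  obtain ⟨χ, hχk⟩ := hχ k
  exact ⟨fun x => if hx : 0 ≤ x then χ ⟨x, hx⟩ else 0,
    fun x hx => by simpa [hx] using hχk ⟨x, hx⟩⟩

/-- Simultaneous primary decomposition of a semigroup of linear maps on a
finite-dimensional complex vector space: the space decomposes into invariant subspaces on
each of which every `g x` has exactly one eigenvalue. -/
theorem complex_primary_decomposition
    {W : Type*} [AddCommGroup W] [Module ℂ W] [FiniteDimensional ℂ W]
    (g : ℝ → W →ₗ[ℂ] W)
    (hg0 : g 0 = LinearMap.id)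
    (hgadd : ∀ x y : ℝ, 0 ≤ x → 0 ≤ y → g (x + y) = g x ∘ₗ g y) :
    ∃ (n : ℕ) (V : Fin n → Submodule ℂ W),
      DirectSum.IsInternal V ∧
      (∀ i, 1 ≤ Module.finrank ℂ (V i)) ∧
      ∃ hinv : ∀ (i : Fin n) (x : ℝ), 0 ≤ x → ∀ v ∈ V i, g x v ∈ V i,
        ∀ i : Fin n, ∃ lam : ℝ → ℂ,
          ∀ (x : ℝ) (hx : 0 ≤ x),
            ((g x).restrict (hinv i x hx)).charpoly
              = (X - C (lam x)) ^ Module.finrank ℂ (V i) :=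
  complex_primary_decomposition_general g hgadd
end

section
/- Let V be a nonzero finite-dimensional real vector space and let g : [0,∞) → L(V) be a semigroup such that for each x ≥ 0 the map g(x) has exactly one eigenvalue λ(x) ∈ ℝ (i.e. the characteristic polynomial of g(x) is (X − λ(x))^{dim V}). Then there exists a nonzero vector v ∈ V such that g(x)v = λ(x)v for all x > 0. -/
/-!
The maps `g x`, `x > 0`, commute because `g x ∘ g y = g (x + y) = g y ∘ g x`, and by
Cayley–Hamilton each `g x - λ x` is nilpotent. Take a minimal nonzero subspace `W` invariant
under all `g x`. Each eigenspace `ker (g x - λ x)` is invariant too, and it meets `W`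
nontrivially because the nilpotent `g x - λ x` has a kernel on `W`; by minimality `W` lies in
every such eigenspace, so any nonzero vector of `W` is a common eigenvector.
-/

open Polynomial

theorem IsNilpotent.exists_ne_zero_apply_eq_zero {R M : Type*} [CommRing R] [AddCommGroup M]
    [Module R M] [Nontrivial M] {N : Module.End R M} (hN : IsNilpotent N) :
    ∃ v : M, v ≠ 0 ∧ N v = 0 := by
  obtain ⟨w, hw⟩ : ∃ w, (N ^ (nilpotencyClass N - 1)) w ≠ 0 := by
    by_contra! h
    exact pow_pred_nilpotencyClass hN (LinearMap.ext h)
  refine ⟨_, hw, ?_⟩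
  rw [← Module.End.mul_apply, ← pow_succ', Nat.sub_add_cancel (pos_nilpotencyClass_iff.mpr hN),
    pow_nilpotencyClass hN, LinearMap.zero_apply]

namespace Module.End

variable {R M : Type*} [CommRing R] [AddCommGroup M] [Module R M]

theorem inf_eigenspace_ne_bot_of_isNilpotent {f : End R M} {μ : R}
    (hf : IsNilpotent (f - μ • 1)) {W : Submodule R M} (hW : W ∈ f.invtSubmodule)
    (hW0 : W ≠ ⊥) : W ⊓ f.eigenspace μ ≠ ⊥ := by
  have : Nontrivial W := Submodule.nontrivial_iff_ne_bot.mpr hW0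
  have hWsub : W ∈ (f - μ • 1).invtSubmodule := fun x hx => W.sub_mem (hW hx) (W.smul_mem μ hx)
  obtain ⟨v, hv0, hv⟩ := (isNilpotent.restrict hWsub hf).exists_ne_zero_apply_eq_zero
  rw [Submodule.ne_bot_iff]
  refine ⟨v, Submodule.mem_inf.mpr ⟨v.2, ?_⟩, by simpa using hv0⟩
  rw [eigenspace_def, LinearMap.mem_ker]
  exact congrArg Subtype.val hv

theorem exists_ne_zero_forall_apply_eq_smul_of_commute [IsArtinian R M] [Nontrivial M]
    {ι : Type*} (f : ι → End R M) (μ : ι → R) (hcomm : ∀ i j, Commute (f i) (f j))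
    (hnil : ∀ i, IsNilpotent (f i - μ i • 1)) :
    ∃ v : M, v ≠ 0 ∧ ∀ i, f i v = μ i • v := by
  obtain ⟨W, ⟨hW0, hWinv⟩, hWmin⟩ := exists_minimal_of_wellFoundedLT
    (fun W : Submodule R M => W ≠ ⊥ ∧ ∀ i, W ∈ (f i).invtSubmodule)
    ⟨⊤, top_ne_bot, fun i => invtSubmodule.top_mem _⟩
  have hWeigen : ∀ i, W ≤ (f i).eigenspace (μ i) := fun i =>
    have hinv : ∀ j, W ⊓ (f i).eigenspace (μ i) ∈ (f j).invtSubmodule := fun j =>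
      invtSubmodule.inf_mem (hWinv j) (mapsTo_genEigenspace_of_comm (hcomm i j) _ 1)
    inf_eq_left.mp (le_antisymm inf_le_left
      (hWmin ⟨inf_eigenspace_ne_bot_of_isNilpotent (hnil i) (hWinv i) hW0, hinv⟩ inf_le_left))
  obtain ⟨v, hvW, hv0⟩ := Submodule.exists_mem_ne_zero_of_ne_bot hW0
  exact ⟨v, hv0, fun i => mem_eigenspace_iff.mp (hWeigen i hvW)⟩

end Module.End

theorem LinearMap.isNilpotent_sub_smul_one_of_charpoly_eq {R M : Type*} [CommRing R]
    [AddCommGroup M] [Module R M] [Module.Free R M] [Module.Finite R M] {f : Module.End R M}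
    {μ : R} (h : f.charpoly = (X - C μ) ^ Module.finrank R M) : IsNilpotent (f - μ • 1) :=
  ⟨Module.finrank R M, by
    simpa [h, Algebra.algebraMap_eq_smul_one] using f.aeval_self_charpoly⟩

theorem common_eigenvector_general
    {V : Type*} [AddCommGroup V] [Module ℝ V] [FiniteDimensional ℝ V] [Nontrivial V]
    (g : ℝ → V →ₗ[ℝ] V)
    (hgadd : ∀ x y : ℝ, 0 ≤ x → 0 ≤ y → g (x + y) = g x ∘ₗ g y)
    (lam : ℝ → ℝ)
    (hchar : ∀ x : ℝ, 0 ≤ x →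
      (g x).charpoly = (X - C (lam x)) ^ Module.finrank ℝ V) :
    ∃ v : V, v ≠ 0 ∧ ∀ x : ℝ, 0 < x → g x v = lam x • v := by
  have hcomm : ∀ x y : Set.Ioi (0 : ℝ), Commute (g x) (g y) := fun x y => by
    have hyx := hgadd y x y.2.le x.2.le
    rw [add_comm] at hyx
    exact ((hgadd x y x.2.le y.2.le).symm.trans hyx : g x ∘ₗ g y = g y ∘ₗ g x)
  obtain ⟨v, hv0, hv⟩ := Module.End.exists_ne_zero_forall_apply_eq_smul_of_commute
    (fun x : Set.Ioi (0 : ℝ) => g x) (fun x => lam x) hcomm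
    fun x => LinearMap.isNilpotent_sub_smul_one_of_charpoly_eq (hchar x x.2.le)
  exact ⟨v, hv0, fun x hx => hv ⟨x, hx⟩⟩

/-- If every `g x` of a semigroup on a nonzero finite-dimensional real
vector space has exactly one (real) eigenvalue `lam x`, then the semigroup has a common
eigenvector. -/
theorem common_eigenvector
    {V : Type*} [AddCommGroup V] [Module ℝ V] [FiniteDimensional ℝ V] [Nontrivial V]
    (g : ℝ → V →ₗ[ℝ] V)
    (hg0 : g 0 = LinearMap.id)
    (hgadd : ∀ x y : ℝ, 0 ≤ x → 0 ≤ y → g (x + y) = g x ∘ₗ g y)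
    (lam : ℝ → ℝ)
    (hchar : ∀ x : ℝ, 0 ≤ x →
      (g x).charpoly = (X - C (lam x)) ^ Module.finrank ℝ V) :
    ∃ v : V, v ≠ 0 ∧ ∀ x : ℝ, 0 < x → g x v = lam x • v :=
  common_eigenvector_general g hgadd lam hchar
end

section
/- Let V be a finite-dimensional real vector space and let g : [0,∞) → L(V) be a semigroup. Then the kernel of g(x) is the same subspace of V for all x > 0; that is, ker(g(x)) = ker(g(y)) for all x, y > 0. -/
/-! Monotonicity: for `s ≤ s'` we have `g s' = g (s' - s) ∘ g s`, so `ker (g s) ≤ ker (g s')`.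
Stabilisation: for `t > 0` and `n ≥ dim V`, `ker (g (n t)) = ker ((g t) ^ n)` no longer depends
on `n`, since the kernels of the powers of an endomorphism stabilise after `dim V` steps.
Given `x, y > 0`, write `x = n t` with `n ≥ dim V` and pick `k ≥ n` with `y ≤ k t`; then
`ker (g y) ≤ ker (g (k t)) = ker (g (n t)) = ker (g x)`, and symmetrically. -/

section Semigroup

variable {V : Type*} [AddCommGroup V] [Module ℝ V] (g : ℝ → V →ₗ[ℝ] V)

lemma semigroup_natCast_mul (hg0 : g 0 = LinearMap.id)
    (hgadd : ∀ x y : ℝ, 0 ≤ x → 0 ≤ y → g (x + y) = g x ∘ₗ g y)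
    {t : ℝ} (ht : 0 ≤ t) (n : ℕ) : g (n * t) = g t ^ n := by
  induction n with
  | zero => simpa [Module.End.one_eq_id] using hg0
  | succ n ih =>
    rw [Nat.cast_succ, add_one_mul, hgadd _ _ (by positivity) ht, ih, pow_succ]
    rfl

lemma ker_semigroup_mono (hgadd : ∀ x y : ℝ, 0 ≤ x → 0 ≤ y → g (x + y) = g x ∘ₗ g y)
    {s s' : ℝ} (hs : 0 ≤ s) (hss' : s ≤ s') :
    LinearMap.ker (g s) ≤ LinearMap.ker (g s') := by
  have hsplit : g s' = g (s' - s) ∘ₗ g s := by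
    rw [← hgadd _ _ (sub_nonneg.2 hss') hs, sub_add_cancel]
  rw [hsplit]
  exact LinearMap.ker_le_ker_comp _ _

variable [FiniteDimensional ℝ V]

lemma ker_semigroup_natCast_mul_eq (hg0 : g 0 = LinearMap.id)
    (hgadd : ∀ x y : ℝ, 0 ≤ x → 0 ≤ y → g (x + y) = g x ∘ₗ g y)
    {t : ℝ} (ht : 0 ≤ t) {n k : ℕ} (hn : Module.finrank ℝ V ≤ n) (hk : Module.finrank ℝ V ≤ k) :
    LinearMap.ker (g (k * t)) = LinearMap.ker (g (n * t)) := by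
  rw [semigroup_natCast_mul g hg0 hgadd ht, semigroup_natCast_mul g hg0 hgadd ht,
    Module.End.ker_pow_eq_ker_pow_finrank_of_le hn, Module.End.ker_pow_eq_ker_pow_finrank_of_le hk]

lemma ker_semigroup_le_of_pos (hg0 : g 0 = LinearMap.id)
    (hgadd : ∀ x y : ℝ, 0 ≤ x → 0 ≤ y → g (x + y) = g x ∘ₗ g y)
    {x y : ℝ} (hx : 0 < x) (hy : 0 ≤ y) :
    LinearMap.ker (g y) ≤ LinearMap.ker (g x) := by
  set n := Module.finrank ℝ V + 1
  have hn : (0 : ℝ) < n := by positivity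
  set t := x / n
  have ht : 0 < t := by positivity
  have hx_eq : x = n * t := (mul_div_cancel₀ x hn.ne').symm
  obtain ⟨k, hk⟩ := exists_nat_ge (y / t)
  have hy_le : y ≤ (max n k : ℕ) * t := by
    rw [← div_le_iff₀ ht]
    exact hk.trans (by exact_mod_cast le_max_right n k)
  calc LinearMap.ker (g y) ≤ LinearMap.ker (g ((max n k : ℕ) * t)) :=
        ker_semigroup_mono g hgadd hy hy_le
    _ = LinearMap.ker (g x) := by
        rw [hx_eq]
        exact ker_semigroup_natCast_mul_eq g hg0 hgadd ht.le (Nat.le_succ _)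
          ((Nat.le_succ _).trans (le_max_left n k))

end Semigroup

/-- For a semigroup of linear maps on a finite-dimensional real vector
space, the kernel of `g x` is the same subspace for every `x > 0`. -/
theorem kernel_constant
    {V : Type*} [AddCommGroup V] [Module ℝ V] [FiniteDimensional ℝ V]
    (g : ℝ → V →ₗ[ℝ] V)
    (hg0 : g 0 = LinearMap.id)
    (hgadd : ∀ x y : ℝ, 0 ≤ x → 0 ≤ y → g (x + y) = g x ∘ₗ g y) :
    ∀ x y : ℝ, 0 < x → 0 < y → LinearMap.ker (g x) = LinearMap.ker (g y) := fun _ _ hx hy =>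
  le_antisymm (ker_semigroup_le_of_pos g hg0 hgadd hy hx.le)
    (ker_semigroup_le_of_pos g hg0 hgadd hx hy.le)
end

section
/- Let V be a finite-dimensional real vector space and let g : [0,∞) → L(V) be a semigroup. Then there exists a decomposition V = V_1 ⊕ V_2 into subspaces invariant under g(x) for all x ≥ 0, such that the restriction of g(x) to V_1 is invertible for every x ≥ 0, and the restriction of g(x) to V_2 is the zero map for every x > 0. -/
/-- A semigroup on a finite-dimensional real vector space splits the space
as `V = V₁ ⊕ V₂` with both summands invariant, the restriction of every `g x` to `V₁`
invertible (a bijection of `V₁`), and `g x` vanishing on `V₂` for every `x > 0`. -/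
theorem invertible_zero_decomposition
    {V : Type*} [AddCommGroup V] [Module ℝ V] [FiniteDimensional ℝ V]
    (g : ℝ → V →ₗ[ℝ] V)
    (hg0 : g 0 = LinearMap.id)
    (hgadd : ∀ x y : ℝ, 0 ≤ x → 0 ≤ y → g (x + y) = g x ∘ₗ g y) :
    ∃ V₁ V₂ : Submodule ℝ V,
      IsCompl V₁ V₂ ∧
      (∀ x : ℝ, 0 ≤ x → ∀ v ∈ V₁, g x v ∈ V₁) ∧
      (∀ x : ℝ, 0 ≤ x → ∀ v ∈ V₂, g x v ∈ V₂) ∧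
      (∀ x : ℝ, 0 ≤ x → Submodule.map (g x) V₁ = V₁ ∧ Disjoint (LinearMap.ker (g x)) V₁) ∧
      (∀ x : ℝ, 0 < x → ∀ v ∈ V₂, g x v = 0) := by
  -- powers of the semigroup
  have hpow : ∀ (t : ℝ), 0 ≤ t → ∀ k : ℕ, (g t) ^ k = g (k * t) := by
    intro t ht k
    induction k with
    | zero => simp [hg0]; rfl
    | succ k ih =>
      have : ((k + 1 : ℕ) : ℝ) * t = k * t + t := by push_cast; ring
      rw [this, hgadd _ _ (by positivity) ht, pow_succ, ih]
      rfl
  -- kernel monotonicity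
  have hkermono : ∀ x y : ℝ, 0 ≤ x → x ≤ y →
      LinearMap.ker (g x) ≤ LinearMap.ker (g y) := by
    intro x y hx hxy
    have : g y = g (y - x) ∘ₗ g x := by
      rw [← hgadd _ _ (by linarith) hx]; ring_nf
    rw [this]
    exact LinearMap.ker_le_ker_comp _ _
  -- range monotonicity
  have hrangemono : ∀ x y : ℝ, 0 ≤ x → x ≤ y →
      LinearMap.range (g y) ≤ LinearMap.range (g x) := by
    intro x y hx hxy
    have : g y = g x ∘ₗ g (y - x) := by
      rw [← hgadd _ _ hx (by linarith)]; ring_nf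
    rw [this]
    exact LinearMap.range_comp_le_range _ _
  -- the kernel is constant on (0, ∞)
  have hkerkey : ∀ x y : ℝ, 0 < x → x ≤ y →
      LinearMap.ker (g y) ≤ LinearMap.ker (g x) := by
    intro x y hx hxy
    have hypos : 0 < y := lt_of_lt_of_le hx hxy
    set N : ℕ := Module.finrank ℝ V + 1 with hN
    have hNne : (N : ℝ) ≠ 0 := by positivity
    set t : ℝ := x / N with ht
    have htpos : 0 < t := by positivity
    have hNt : (N : ℝ) * t = x := by
      rw [ht]; field_simp
    set m : ℕ := N * ⌈y / x⌉₊ with hm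
    have hceil : 1 ≤ ⌈y / x⌉₊ := Nat.one_le_ceil_iff.mpr (div_pos hypos hx)
    have hmN : N ≤ m := by
      calc N = N * 1 := (mul_one N).symm
      _ ≤ N * ⌈y / x⌉₊ := Nat.mul_le_mul_left N hceil
    have hmt : y ≤ (m : ℝ) * t := by
      have e : (m : ℝ) * t = (⌈y / x⌉₊ : ℝ) * ((N : ℝ) * t) := by
        rw [hm]; push_cast; ring
      rw [hNt] at e
      rw [e]
      calc y = (y / x) * x := by field_simp
      _ ≤ (⌈y / x⌉₊ : ℝ) * x := mul_le_mul_of_nonneg_right (Nat.le_ceil _) hx.le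
    have hf1 : Module.finrank ℝ V ≤ N := Nat.le_succ _
    have hf2 : Module.finrank ℝ V ≤ m := le_trans hf1 hmN
    -- ker (g x) = ker ((g t)^N) = ker ((g t)^m) ⊇ ker (g y)
    have e1 : LinearMap.ker ((g t) ^ N) = LinearMap.ker ((g t) ^ m) := by
      rw [Module.End.ker_pow_eq_ker_pow_finrank_of_le (f := g t) hf1,
        Module.End.ker_pow_eq_ker_pow_finrank_of_le (f := g t) hf2]
    have e2 : g x = (g t) ^ N := by rw [hpow t htpos.le N, hNt]
    have e3 : (g t) ^ m = g ((m : ℝ) * t) := hpow t htpos.le m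
    rw [e2, e1, e3]
    exact hkermono y _ (by linarith) hmt
  have hker : ∀ x y : ℝ, 0 < x → 0 < y →
      LinearMap.ker (g x) = LinearMap.ker (g y) := by
    intro x y hx hy
    rcases le_total x y with h | h
    · exact le_antisymm (hkermono x y hx.le h) (hkerkey x y hx h)
    · exact le_antisymm (hkerkey y x hy h) (hkermono y x hy.le h)
  -- the range is constant on (0, ∞), by rank-nullity
  have hrange : ∀ x y : ℝ, 0 < x → 0 < y →
      LinearMap.range (g x) = LinearMap.range (g y) := by
    have key : ∀ x y : ℝ, 0 < x → x ≤ y →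
        LinearMap.range (g x) = LinearMap.range (g y) := by
      intro x y hx hxy
      refine (Submodule.eq_of_le_of_finrank_le (hrangemono x y hx.le hxy) ?_).symm
      have h1 := LinearMap.finrank_range_add_finrank_ker (g x)
      have h2 := LinearMap.finrank_range_add_finrank_ker (g y)
      rw [hker x y hx (by linarith)] at h1
      omega
    intro x y hx hy
    rcases le_total x y with h | h
    · exact key x y hx h
    · exact (key y x hy h).symm
  -- Fitting decomposition for g 1
  obtain ⟨k, hk⟩ := Filter.eventually_atTop.mp
    ((g 1).eventually_isCompl_ker_pow_range_pow)
  set N : ℕ := k + 1 with hNdef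
  have hfit : IsCompl (LinearMap.ker ((g 1) ^ N)) (LinearMap.range ((g 1) ^ N)) :=
    hk N (by omega)
  have hNpos : (0 : ℝ) < (N : ℝ) := by positivity
  have epow : (g 1) ^ N = g (N : ℝ) := by rw [hpow 1 zero_le_one N, mul_one]
  rw [epow] at hfit
  refine ⟨LinearMap.range (g 1), LinearMap.ker (g 1), ?_, ?_, ?_, ?_, ?_⟩
  · -- IsCompl
    rw [hrange 1 _ one_pos hNpos, hker 1 _ one_pos hNpos]
    exact hfit.symm
  · -- invariance of V₁
    intro x hx v hv
    rcases eq_or_lt_of_le hx with h | h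
    · rw [← h, hg0]; exact hv
    · rw [hrange 1 x one_pos h]
      exact LinearMap.mem_range_self _ v
  · -- invariance of V₂
    intro x hx v hv
    rcases eq_or_lt_of_le hx with h | h
    · rw [← h, hg0]; exact hv
    · rw [hker 1 x one_pos h] at hv
      rw [hv]
      exact Submodule.zero_mem _
  · -- map and disjointness on V₁
    intro x hx
    rcases eq_or_lt_of_le hx with h | h
    · rw [← h, hg0]
      constructor
      · exact Submodule.map_id _
      · simp
    · constructor
      · rw [hrange 1 x one_pos h, ← LinearMap.range_comp,
          ← hgadd x x h.le h.le, hrange _ 1 (by linarith) one_pos]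
        exact hrange 1 x one_pos h
      · rw [hker x _ h hNpos, hrange 1 _ one_pos hNpos]
        exact hfit.disjoint
  · -- vanishing on V₂
    intro x hx v hv
    rw [hker 1 x one_pos hx] at hv
    exact hv
end

section
/- Let 𝕂 be ℝ or ℂ, let g : [0,∞) → L(𝕂^d) be a semigroup such that g(x) is invertible for every x ≥ 0, and for each x ≥ 0 let g(x) = D(x)T(x) be the multiplicative Jordan–Chevalley decomposition of g(x), i.e. D(x) is diagonalizable over the algebraic closure of 𝕂 (semisimple), T(x) − id is nilpotent (T(x) is unipotent), and D(x)T(x) = T(x)D(x). Then (D(x))_{x≥0} and (T(x))_{x≥0} are themselves semigroups (D(0) = T(0) = id, D(x+y) = D(x)D(y) and T(x+y) = T(x)T(y) for all x,y ≥ 0), and the two families commute with each other: T(x)D(y) = D(y)T(x) for all x,y ≥ 0. -/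
/-!
If `A = D * T` is a multiplicative Jordan–Chevalley decomposition, then `A = D * (T - 1) + D` is
the additive one, so `D` is a polynomial in `A`; when `A` is invertible so is `D`, and
`T = D⁻¹ * A`. Hence everything commuting with `A` commutes with `D` and `T`, and both parts are
unique. As `g x` and `g y` commute, all their parts commute, so `(D x * D y) * (T x * T y)` is a
multiplicative Jordan–Chevalley decomposition of `g (x + y)`, and uniqueness gives the semigroup
laws.
-/

theorem Commute.isNilpotent_mul_sub_one {R : Type*} [Ring R] {a b : R} (h : Commute a b)
    (ha : IsNilpotent (a - 1)) (hb : IsNilpotent (b - 1)) : IsNilpotent (a * b - 1) := by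
  have hsplit : a * b - 1 = (a - 1) * b + (b - 1) := by noncomm_ring
  have hab : IsNilpotent ((a - 1) * b) := (h.sub_left (.one_left b)).isNilpotent_mul_right ha
  have hcomm : Commute ((a - 1) * b) (b - 1) :=
    ((h.sub_left (.one_left b)).mul_left (.refl b)).sub_right (.one_right _)
  rw [hsplit]
  exact hcomm.isNilpotent_add hab hb

namespace Module.End

variable {K V : Type*} [Field K] [AddCommGroup V] [Module K V]

structure IsMulJordanChevalley (A D T : End K V) : Prop where
  eq_mul : A = D * T
  isSemisimple : D.IsSemisimple
  isNilpotent_sub_one : IsNilpotent (T - 1)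
  commute : Commute D T

namespace IsMulJordanChevalley

variable {A B D T : End K V}

theorem one : IsMulJordanChevalley (1 : End K V) 1 1 :=
  ⟨(one_mul 1).symm, isSemisimple_id, by rw [sub_self]; exact .zero, .refl 1⟩

theorem mul_of_commute [FiniteDimensional K V] [PerfectField K] {A₁ D₁ T₁ A₂ D₂ T₂ : End K V}
    (h₁ : IsMulJordanChevalley A₁ D₁ T₁) (h₂ : IsMulJordanChevalley A₂ D₂ T₂)
    (hDD : Commute D₁ D₂) (hDT : Commute D₁ T₂) (hTD : Commute T₁ D₂) (hTT : Commute T₁ T₂) :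
    IsMulJordanChevalley (A₁ * A₂) (D₁ * D₂) (T₁ * T₂) where
  eq_mul := by rw [h₁.eq_mul, h₂.eq_mul, hTD.mul_mul_mul_comm]
  isSemisimple := h₁.isSemisimple.mul_of_commute hDD h₂.isSemisimple
  isNilpotent_sub_one :=
    hTT.isNilpotent_mul_sub_one h₁.isNilpotent_sub_one h₂.isNilpotent_sub_one
  commute := (h₁.commute.mul_right hDT).mul_left (hTD.symm.mul_right h₂.commute)

variable (h : IsMulJordanChevalley A D T)
include h

theorem isUnit_unipotent : IsUnit T := by
  simpa using h.isNilpotent_sub_one.isUnit_add_one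

theorem isUnit_semisimple (hA : IsUnit A) : IsUnit D := by
  obtain ⟨u, hu⟩ := h.isUnit_unipotent
  have hD : D = A * ↑u⁻¹ := by rw [h.eq_mul, ← hu, mul_assoc, Units.mul_inv, mul_one]
  exact hD ▸ hA.mul u⁻¹.isUnit

theorem isNilpotent_sub_one_mul : IsNilpotent (D * (T - 1)) :=
  (h.commute.sub_right (.one_right D)).isNilpotent_mul_left h.isNilpotent_sub_one

theorem mul_sub_one_add_eq : D * (T - 1) + D = A := by
  rw [h.eq_mul, mul_sub, mul_one, sub_add_cancel]

theorem commute_mul_sub_one : Commute (D * (T - 1)) D :=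
  (Commute.refl D).mul_left (h.commute.sub_right (.one_right D)).symm

variable [FiniteDimensional K V] [PerfectField K]

theorem semisimple_mem_adjoin : D ∈ Algebra.adjoin K {A} := by
  obtain ⟨n, hn, s, hs, hn_nil, hss, hA⟩ := A.exists_isNilpotent_isSemisimple
  have hns : Commute n s := Algebra.commute_of_mem_adjoin_singleton_of_commute hs
    (Algebra.commute_of_mem_adjoin_self hn).symm
  have hD : D = s := (isNilpotent_isSemisimple_unique h.isNilpotent_sub_one_mul h.isSemisimple
    hn_nil hss h.commute_mul_sub_one hns (h.mul_sub_one_add_eq.trans hA)).2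
  exact hD ▸ hs

theorem commute_semisimple (hB : Commute B A) : Commute B D :=
  Algebra.commute_of_mem_adjoin_singleton_of_commute h.semisimple_mem_adjoin hB

theorem commute_unipotent (hA : IsUnit A) (hB : Commute B A) : Commute B T := by
  have hBD := h.commute_semisimple hB
  apply (h.isUnit_semisimple hA).mul_left_cancel
  calc D * (B * T) = B * A := by rw [← mul_assoc, ← hBD.eq, mul_assoc, h.eq_mul]
    _ = A * B := hB.eq
    _ = D * (T * B) := by rw [h.eq_mul, mul_assoc]

theorem unique {D' T' : End K V} (hA : IsUnit A) (h' : IsMulJordanChevalley A D' T') :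
    D = D' ∧ T = T' := by
  have hD : D = D' := (isNilpotent_isSemisimple_unique h.isNilpotent_sub_one_mul h.isSemisimple
    h'.isNilpotent_sub_one_mul h'.isSemisimple h.commute_mul_sub_one h'.commute_mul_sub_one
    (h.mul_sub_one_add_eq.trans h'.mul_sub_one_add_eq.symm)).2
  refine ⟨hD, (h.isUnit_semisimple hA).mul_left_cancel ?_⟩
  rw [← h.eq_mul, hD, ← h'.eq_mul]

theorem mul {A' D' T' : End K V} (h' : IsMulJordanChevalley A' D' T') (hA : IsUnit A)
    (hA' : IsUnit A') (hAA' : Commute A A') :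
    IsMulJordanChevalley (A * A') (D * D') (T * T') :=
  have hDA' : Commute D A' := (h.commute_semisimple hAA'.symm).symm
  have hTA' : Commute T A' := (h.commute_unipotent hA hAA'.symm).symm
  h.mul_of_commute h' (h'.commute_semisimple hDA') (h'.commute_unipotent hA' hDA')
    (h'.commute_semisimple hTA') (h'.commute_unipotent hA' hTA')

end IsMulJordanChevalley

end Module.End

open Module.End in
/-- For a semigroup of invertible linear maps on `𝕂^d` (`𝕂 = ℝ` or `ℂ`),
the semisimple parts `D x` and unipotent parts `T x` of the multiplicative
Jordan–Chevalley decompositions `g x = D x * T x` form semigroups themselves, and the two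
families commute with each other. -/
theorem jordan_chevalley_semigroup
    (𝕂 : Type*) [RCLike 𝕂] (d : ℕ)
    (g : ℝ → Module.End 𝕂 (Fin d → 𝕂))
    (hg0 : g 0 = 1)
    (hgadd : ∀ x y : ℝ, 0 ≤ x → 0 ≤ y → g (x + y) = g x * g y)
    (hginv : ∀ x : ℝ, 0 ≤ x → IsUnit (g x))
    (D T : ℝ → Module.End 𝕂 (Fin d → 𝕂))
    (hDT : ∀ x : ℝ, 0 ≤ x → g x = D x * T x)
    (hD : ∀ x : ℝ, 0 ≤ x → (D x).IsSemisimple)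
    (hT : ∀ x : ℝ, 0 ≤ x → IsNilpotent (T x - 1))
    (hcomm : ∀ x : ℝ, 0 ≤ x → D x * T x = T x * D x) :
    D 0 = 1 ∧ T 0 = 1 ∧
    (∀ x y : ℝ, 0 ≤ x → 0 ≤ y → D (x + y) = D x * D y) ∧
    (∀ x y : ℝ, 0 ≤ x → 0 ≤ y → T (x + y) = T x * T y) ∧
    (∀ x y : ℝ, 0 ≤ x → 0 ≤ y → T x * D y = D y * T x) := by
  have hJC (x : ℝ) (hx : 0 ≤ x) : IsMulJordanChevalley (g x) (D x) (T x) :=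
    ⟨hDT x hx, hD x hx, hT x hx, hcomm x hx⟩
  have hg_comm (x y : ℝ) (hx : 0 ≤ x) (hy : 0 ≤ y) : Commute (g x) (g y) := by
    rw [Commute, SemiconjBy, ← hgadd x y hx hy, ← hgadd y x hy hx, add_comm]
  have h0 := (hJC 0 le_rfl).unique (hginv 0 le_rfl) (by rw [hg0]; exact .one)
  have hadd (x y : ℝ) (hx : 0 ≤ x) (hy : 0 ≤ y) :
      D (x + y) = D x * D y ∧ T (x + y) = T x * T y :=
    (hJC _ (add_nonneg hx hy)).unique (hginv _ (add_nonneg hx hy)) <| hgadd x y hx hy ▸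
      (hJC x hx).mul (hJC y hy) (hginv x hx) (hginv y hy) (hg_comm x y hx hy)
  refine ⟨h0.1, h0.2, fun x y hx hy => (hadd x y hx hy).1, fun x y hx hy => (hadd x y hx hy).2,
    fun x y hx hy => ?_⟩
  exact ((hJC y hy).commute_semisimple
    ((hJC x hx).commute_unipotent (hginv x hx) (hg_comm x y hx hy).symm).symm).eq
end

section
/- Let V be a finite-dimensional real vector space and let T : [0,∞) → L(V) satisfy T(0) = id, T(x+y) = T(x)T(y) for all x,y ≥ 0, and suppose every T(x) is unipotent (T(x) − id is nilpotent). Let N(x) := log(T(x)) = Σ_{k≥1} (1/k)(id − T(x))^k (a finite sum, each N(x) nilpotent). Then the maps N(x) pairwise commute, N(x)N(y) = N(y)N(x), and they are additive: N(x) + N(y) = N(x+y) for all x,y ≥ 0. -/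
/-!
The maps `T x` commute because `T (x + y) = T (y + x)`, so with `L(a) = ∑_{k ≤ M} a^k / k`, the
truncated series of `-log (1 - a)`, everything reduces to `L(1 - uv) = L(1 - u) + L(1 - v)` for
commuting `u`, `v` such that `1 - u`, `1 - v`, `1 - uv` are nilpotent of order at most `dim V`
(Cayley–Hamilton). Inside the commutative algebra generated by `u` and `v`, deform along a
polynomial variable: `U = 1 - (1 - u) X`, `V = 1 - (1 - v) X`. Since `L(1 - W)' · W = -W'` once
`1 - W` is nilpotent enough, `P = L(1 - U) + L(1 - V) - L(1 - UV)` has `P' · UV = 0`, and `UV` is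
a unit, so `P` is constant (characteristic zero). As `P(0) = 0`, also `P(1) = 0`.
-/

open Polynomial Finset

theorem IsNilpotent.pow_finrank_eq_zero {R M : Type*} [CommRing R] [IsDomain R] [AddCommGroup M]
    [Module R M] [Module.Finite R M] [Module.Free R M] {φ : Module.End R M} (h : IsNilpotent φ) :
    φ ^ Module.finrank R M = 0 := by
  simpa [h.charpoly_eq_X_pow_finrank] using φ.aeval_self_charpoly

theorem Commute.pow_one_sub_mul_eq_zero {A : Type*} [Ring A] {u v : A} (huv : Commute u v)
    {n : ℕ} (hu : (1 - u) ^ (n + 1) = 0) (hv : (1 - v) ^ (n + 1) = 0) :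
    (1 - u * v) ^ (2 * n + 1) = 0 := by
  have hu' : Commute (1 - u) u := (Commute.one_left u).sub_left (.refl u)
  have huv' : Commute (1 - u) (1 - v) :=
    (Commute.one_right _).sub_right ((Commute.one_left v).sub_left huv)
  have hv' : (u * (1 - v)) ^ (n + 1) = 0 := by
    rw [((Commute.one_right u).sub_right huv).mul_pow, hv, mul_zero]
  rw [show 1 - u * v = (1 - u) + u * (1 - v) by noncomm_ring]
  exact (hu'.mul_right huv').add_pow_eq_zero_of_add_le_succ_of_pow_eq_zero hu hv' (by omega)

section TruncLog

variable (𝕜 : Type*) {R S : Type*} [Field 𝕜]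

def truncLog [Ring R] [Module 𝕜 R] (M : ℕ) (a : R) : R :=
  ∑ k ∈ Icc 1 M, (k : 𝕜)⁻¹ • a ^ k

variable {𝕜}

theorem truncLog_zero [Ring R] [Module 𝕜 R] (M : ℕ) : truncLog 𝕜 M (0 : R) = 0 :=
  sum_eq_zero fun k hk => by rw [zero_pow (by grind), smul_zero]

theorem truncLog_eq_of_pow_eq_zero [Ring R] [Module 𝕜 R] {a : R} {n m : ℕ}
    (ha : a ^ (n + 1) = 0) (hnm : n ≤ m) : truncLog 𝕜 m a = truncLog 𝕜 n a :=
  (sum_subset (Icc_subset_Icc_right hnm) fun k hk hkn => by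
    rw [pow_eq_zero_of_le (by grind) ha, smul_zero]).symm

theorem map_truncLog [Ring R] [Ring S] [Algebra 𝕜 R] [Algebra 𝕜 S] (f : R →ₐ[𝕜] S)
    (M : ℕ) (a : R) : f (truncLog 𝕜 M a) = truncLog 𝕜 M (f a) := by
  simp only [truncLog, map_sum, map_smul, map_pow]

theorem Commute.truncLog_truncLog [Ring R] [Algebra 𝕜 R] {a b : R} (hab : Commute a b)
    (M N : ℕ) : Commute (truncLog 𝕜 M a) (truncLog 𝕜 N b) :=
  .sum_left _ _ _ fun _ _ => .sum_right _ _ _ fun _ _ =>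
    ((hab.pow_pow _ _).smul_left _).smul_right _

variable [CharZero 𝕜]

theorem derivative_truncLog_mul_one_sub [CommRing R] [Algebra 𝕜 R] (M : ℕ) (r : R[X]) :
    derivative (truncLog 𝕜 M r) * (1 - r) = (1 - r ^ M) * derivative r := by
  have hterm (j : ℕ) :
      derivative (((j + 1 : ℕ) : 𝕜)⁻¹ • r ^ (j + 1)) = r ^ j * derivative r := by
    have hC : (C ((j : R) + 1) : R[X]) = algebraMap 𝕜 R[X] ((j : 𝕜) + 1) := by simp
    rw [derivative_smul, derivative_pow_succ, hC, mul_assoc, ← Algebra.smul_def, smul_smul,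
      Nat.cast_succ, inv_mul_cancel₀ (Nat.cast_add_one_ne_zero j), one_smul]
  rw [truncLog, map_sum, ← Ico_add_one_right_eq_Icc, sum_Ico_eq_sum_range, Nat.add_sub_cancel]
  simp only [add_comm 1, hterm, ← sum_mul]
  rw [mul_right_comm, geom_sum_mul_neg]

theorem derivative_truncLog_one_sub_mul [CommRing R] [Algebra 𝕜 R] {M : ℕ} {u : R[X]}
    (hu : (1 - u) ^ M = 0) : derivative (truncLog 𝕜 M (1 - u)) * u = -derivative u := by
  have h := derivative_truncLog_mul_one_sub (𝕜 := 𝕜) M (1 - u)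
  rwa [sub_sub_cancel, hu, sub_zero, one_mul, derivative_sub, derivative_one, zero_sub] at h

theorem derivative_truncLog_one_sub_mul_eq [CommRing R] [Algebra 𝕜 R] {M : ℕ} {U V : R[X]}
    (hU : (1 - U) ^ M = 0) (hV : (1 - V) ^ M = 0) (hUV : (1 - U * V) ^ M = 0) :
    derivative (truncLog 𝕜 M (1 - U * V)) =
      derivative (truncLog 𝕜 M (1 - U)) + derivative (truncLog 𝕜 M (1 - V)) := by
  have hunit : IsUnit (U * V) := by
    simpa only [sub_sub_cancel] using
      (IsNilpotent.isUnit_one_sub ⟨_, hU⟩).mul (IsNilpotent.isUnit_one_sub ⟨_, hV⟩)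
  refine hunit.mul_left_injective ?_
  calc derivative (truncLog 𝕜 M (1 - U * V)) * (U * V)
      = -derivative (U * V) := derivative_truncLog_one_sub_mul (𝕜 := 𝕜) hUV
    _ = -derivative U * V + -derivative V * U := by rw [derivative_mul]; ring
    _ = (derivative (truncLog 𝕜 M (1 - U)) + derivative (truncLog 𝕜 M (1 - V)))
          * (U * V) := by
      rw [← derivative_truncLog_one_sub_mul (𝕜 := 𝕜) hU,
        ← derivative_truncLog_one_sub_mul (𝕜 := 𝕜) hV]
      ring

theorem truncLog_one_sub_mul [CommRing R] [Algebra 𝕜 R] {u v : R} {n : ℕ}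
    (hu : (1 - u) ^ (n + 1) = 0) (hv : (1 - v) ^ (n + 1) = 0) :
    truncLog 𝕜 (2 * n + 1) (1 - u * v) =
      truncLog 𝕜 (2 * n + 1) (1 - u) + truncLog 𝕜 (2 * n + 1) (1 - v) := by
  set M := 2 * n + 1
  set U : R[X] := 1 - C (1 - u) * X
  set V : R[X] := 1 - C (1 - v) * X
  have hU : (1 - U) ^ (n + 1) = 0 := by
    rw [sub_sub_cancel, mul_pow, ← C_pow, hu, C_0, zero_mul]
  have hV : (1 - V) ^ (n + 1) = 0 := by
    rw [sub_sub_cancel, mul_pow, ← C_pow, hv, C_0, zero_mul]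
  set P := truncLog 𝕜 M (1 - U) + truncLog 𝕜 M (1 - V) - truncLog 𝕜 M (1 - U * V)
  have hP : derivative P = 0 := by
    rw [derivative_sub, derivative_add, derivative_truncLog_one_sub_mul_eq
      (pow_eq_zero_of_le (by omega) hU) (pow_eq_zero_of_le (by omega) hV)
      ((Commute.all U V).pow_one_sub_mul_eq_zero hU hV), sub_self]
  have hev (x : R) : aeval x P = truncLog 𝕜 M (1 - aeval x U) + truncLog 𝕜 M (1 - aeval x V)
      - truncLog 𝕜 M (1 - aeval x U * aeval x V) := by
    have h := map_truncLog (R := R[X]) ((aeval x).restrictScalars 𝕜) M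
    simp only [AlgHom.coe_restrictScalars'] at h
    simp only [P, map_add, map_sub, map_one, map_mul, h]
  have : IsAddTorsionFree R := .of_isTorsionFree 𝕜 R
  have hP0 : aeval (0 : R) P = 0 := by simp [hev, U, V, truncLog_zero]
  have hP1 : aeval (1 : R) P = truncLog 𝕜 M (1 - u) + truncLog 𝕜 M (1 - v)
      - truncLog 𝕜 M (1 - u * v) := by simp [hev, U, V]
  have hconst : aeval (1 : R) P = aeval (0 : R) P := by
    rw [eq_C_of_derivative_eq_zero hP, aeval_C, aeval_C]
  rw [hP1, hP0, sub_eq_zero] at hconst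
  exact hconst.symm

open scoped IsMulCommutative in
theorem Commute.truncLog_one_sub_mul [Ring R] [Algebra 𝕜 R] {u v : R} (huv : Commute u v)
    {n : ℕ} (hu : (1 - u) ^ (n + 1) = 0) (hv : (1 - v) ^ (n + 1) = 0)
    (huv' : (1 - u * v) ^ (n + 1) = 0) :
    truncLog 𝕜 n (1 - u * v) = truncLog 𝕜 n (1 - u) + truncLog 𝕜 n (1 - v) := by
  let S := Algebra.adjoin 𝕜 ({u, v} : Set R)
  have : IsMulCommutative S := Algebra.isMulCommutative_adjoin 𝕜 (by
    rintro a (rfl | rfl) b (rfl | rfl) <;> first | rfl | exact huv | exact huv.symm)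
  let u' : S := ⟨u, Algebra.subset_adjoin (by simp)⟩
  let v' : S := ⟨v, Algebra.subset_adjoin (by simp)⟩
  have hu' : (1 - u') ^ (n + 1) = 0 := Subtype.ext hu
  have hv' : (1 - v') ^ (n + 1) = 0 := Subtype.ext hv
  have h := congrArg S.val (_root_.truncLog_one_sub_mul (𝕜 := 𝕜) hu' hv')
  simp only [map_add, map_truncLog, map_sub, map_one, map_mul, Subalgebra.coe_val] at h
  rwa [truncLog_eq_of_pow_eq_zero huv' (by omega), truncLog_eq_of_pow_eq_zero hu (by omega),
    truncLog_eq_of_pow_eq_zero hv (by omega)] at h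

end TruncLog

theorem unipotent_log_additive_general
    {V : Type*} [AddCommGroup V] [Module ℝ V] [FiniteDimensional ℝ V]
    (T : ℝ → Module.End ℝ V)
    (hTadd : ∀ x y : ℝ, 0 ≤ x → 0 ≤ y → T (x + y) = T x * T y)
    (hTuni : ∀ x : ℝ, 0 ≤ x → IsNilpotent (T x - 1))
    (N : ℝ → Module.End ℝ V)
    (hN : ∀ x : ℝ, 0 ≤ x →
      N x = ∑ k ∈ Finset.Icc 1 (Module.finrank ℝ V - 1), ((k : ℝ)⁻¹) • (1 - T x) ^ k) :
    (∀ x y : ℝ, 0 ≤ x → 0 ≤ y → N x * N y = N y * N x) ∧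
    (∀ x y : ℝ, 0 ≤ x → 0 ≤ y → N x + N y = N (x + y)) := by
  set n := Module.finrank ℝ V - 1
  have hN' : ∀ x, 0 ≤ x → N x = truncLog ℝ n (1 - T x) := hN
  have hT : ∀ x y, 0 ≤ x → 0 ≤ y → Commute (T x) (T y) := fun x y hx hy => by
    rw [Commute, SemiconjBy, ← hTadd x y hx hy, ← hTadd y x hy hx, add_comm]
  have hpow : ∀ x, 0 ≤ x → (1 - T x) ^ (n + 1) = 0 := fun x hx => by
    have h := (hTuni x hx).neg.pow_finrank_eq_zero
    rw [neg_sub] at h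
    exact pow_eq_zero_of_le (by omega) h
  refine ⟨fun x y hx hy => ?_, fun x y hx hy => ?_⟩
  · rw [hN' x hx, hN' y hy]
    exact ((Commute.one_right _).sub_right
      ((Commute.one_left _).sub_left (hT x y hx hy))).truncLog_truncLog n n
  · have hxy := add_nonneg hx hy
    rw [hN' x hx, hN' y hy, hN' _ hxy, hTadd x y hx hy]
    exact ((hT x y hx hy).truncLog_one_sub_mul (hpow x hx) (hpow y hy)
      (hTadd x y hx hy ▸ hpow _ hxy)).symm

/-- For a semigroup of unipotent linear maps `T x` on a finite-dimensional
real vector space, the logarithms `N x = Σ_{k=1}^{dim V - 1} (1/k)(id - T x)^k` pairwise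
commute and are additive in `x`. -/
theorem unipotent_log_additive
    {V : Type*} [AddCommGroup V] [Module ℝ V] [FiniteDimensional ℝ V]
    (T : ℝ → Module.End ℝ V)
    (hT0 : T 0 = 1)
    (hTadd : ∀ x y : ℝ, 0 ≤ x → 0 ≤ y → T (x + y) = T x * T y)
    (hTuni : ∀ x : ℝ, 0 ≤ x → IsNilpotent (T x - 1))
    (N : ℝ → Module.End ℝ V)
    (hN : ∀ x : ℝ, 0 ≤ x →
      N x = ∑ k ∈ Finset.Icc 1 (Module.finrank ℝ V - 1), ((k : ℝ)⁻¹) • (1 - T x) ^ k) :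
    (∀ x y : ℝ, 0 ≤ x → 0 ≤ y → N x * N y = N y * N x) ∧
    (∀ x y : ℝ, 0 ≤ x → 0 ≤ y → N x + N y = N (x + y)) :=
  unipotent_log_additive_general T hTadd hTuni N hN
end

section
/- Let d be even, let ν : ℝ → ℝ be additive, let A be an invertible real d×d matrix, and set S(x) := A Q_d^ν(x) A^{-1} for x ≥ 0. Suppose each S(x) is an isometry of ℝ^d (an orthogonal matrix). Then there exists an orthogonal d×d matrix U such that S(x) = U Q_d^ν(x) Uᵀ for all x ≥ 0. -/
open scoped Matrix

noncomputable section

/-- The 2×2 rotation matrix `Q(θ)`. -/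
def rotMat (θ : ℝ) : Matrix (Fin 2) (Fin 2) ℝ :=
  !![Real.cos θ, Real.sin θ; -Real.sin θ, Real.cos θ]

/-- The block-diagonal matrix `Q_d^ν(x)` consisting of `m = d/2` rotation blocks `Q(ν x)`,
indexed by `Fin 2 × Fin m` (so `d = 2 * m`). -/
def Qnu (m : ℕ) (ν : ℝ → ℝ) (x : ℝ) : Matrix (Fin 2 × Fin m) (Fin 2 × Fin m) ℝ :=
  Matrix.blockDiagonal fun _ : Fin m => rotMat (ν x)

/-!
Polar decomposition. Write `A = U R` with `R = √(AᵀA)` and `U` orthogonal. If `Q` and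
`A Q A⁻¹` are both orthogonal, then `Qᵀ (AᵀA) Q = AᵀA`, i.e. `Q` commutes with `AᵀA`, hence with
every continuous function of it, in particular with `R`. Therefore
`A Q A⁻¹ = U (R Q R⁻¹) Uᵀ = U Q Uᵀ`, with one `U` serving every such `Q`.
-/

open scoped MatrixOrder

lemma rotMat_transpose_mul_self (θ : ℝ) : (rotMat θ)ᵀ * rotMat θ = 1 := by
  ext i j
  fin_cases i <;> fin_cases j <;> simp [rotMat, Matrix.mul_apply, Fin.sum_univ_two, ← sq, mul_comm]

lemma Qnu_transpose_mul_self (m : ℕ) (ν : ℝ → ℝ) (x : ℝ) : (Qnu m ν x)ᵀ * Qnu m ν x = 1 := by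
  rw [Qnu, Matrix.blockDiagonal_transpose, ← Matrix.blockDiagonal_mul, ← Matrix.blockDiagonal_one]
  exact congrArg Matrix.blockDiagonal (funext fun _ => rotMat_transpose_mul_self (ν x))

section PolarDecomposition

variable {n : Type*} [Fintype n]

lemma transpose_mul_self_nonneg (A : Matrix n n ℝ) : 0 ≤ Aᵀ * A := by
  simpa only [Matrix.star_eq_conjTranspose, Matrix.conjTranspose_eq_transpose_of_trivial]
    using star_mul_self_nonneg A

variable [DecidableEq n]

lemma commute_transpose_mul_self_of_conj_orthogonal {A Q : Matrix n n ℝ} (hA : IsUnit A)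
    (hQ : Qᵀ * Q = 1) (hAQ : (A * Q * A⁻¹)ᵀ * (A * Q * A⁻¹) = 1) :
    Commute (Aᵀ * A) Q := by
  have hAinv : A⁻¹ * A = 1 := Matrix.nonsing_inv_mul A ((Matrix.isUnit_iff_isUnit_det A).mp hA)
  have hAinvT : Aᵀ * A⁻¹ᵀ = 1 := by rw [← Matrix.transpose_mul, hAinv, Matrix.transpose_one]
  have hinvariant : Qᵀ * (Aᵀ * A) * Q = Aᵀ * A :=
    calc Qᵀ * (Aᵀ * A) * Q
        = (Aᵀ * A⁻¹ᵀ) * (Qᵀ * (Aᵀ * A) * Q) * (A⁻¹ * A) := by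
          rw [hAinvT, hAinv, Matrix.one_mul, Matrix.mul_one]
      _ = Aᵀ * ((A * Q * A⁻¹)ᵀ * (A * Q * A⁻¹)) * A := by
          simp only [Matrix.transpose_mul, Matrix.transpose_nonsing_inv, Matrix.mul_assoc]
      _ = Aᵀ * A := by rw [hAQ, Matrix.mul_one]
  calc Aᵀ * A * Q = Q * (Qᵀ * (Aᵀ * A) * Q) := by
        rw [← Matrix.mul_assoc, ← Matrix.mul_assoc, mul_eq_one_comm.mp hQ, Matrix.one_mul]
    _ = Q * (Aᵀ * A) := by rw [hinvariant]

lemma transpose_cfcSqrt (M : Matrix n n ℝ) : (CFC.sqrt M)ᵀ = CFC.sqrt M := by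
  simpa [Matrix.IsHermitian] using (Matrix.nonneg_iff_posSemidef.mp (CFC.sqrt_nonneg M)).1

lemma isUnit_cfcSqrt_transpose_mul_self {A : Matrix n n ℝ} (hA : IsUnit A) :
    IsUnit (CFC.sqrt (Aᵀ * A)) := by
  rw [CFC.isUnit_sqrt_iff _ (transpose_mul_self_nonneg A)]
  exact ((Matrix.isUnit_transpose A).mpr hA).mul hA

def orthogonalPolarFactor (A : Matrix n n ℝ) : Matrix n n ℝ :=
  A * (CFC.sqrt (Aᵀ * A))⁻¹

lemma orthogonalPolarFactor_mul_cfcSqrt {A : Matrix n n ℝ} (hA : IsUnit A) :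
    orthogonalPolarFactor A * CFC.sqrt (Aᵀ * A) = A := by
  rw [orthogonalPolarFactor, Matrix.mul_assoc,
    Matrix.nonsing_inv_mul _ ((Matrix.isUnit_iff_isUnit_det _).mp
      (isUnit_cfcSqrt_transpose_mul_self hA)), Matrix.mul_one]

lemma orthogonalPolarFactor_transpose_mul_self {A : Matrix n n ℝ} (hA : IsUnit A) :
    (orthogonalPolarFactor A)ᵀ * orthogonalPolarFactor A = 1 := by
  set R := CFC.sqrt (Aᵀ * A)
  have hRR : R * R = Aᵀ * A := CFC.sqrt_mul_sqrt_self _ (transpose_mul_self_nonneg A)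
  have hR := (Matrix.isUnit_iff_isUnit_det R).mp (isUnit_cfcSqrt_transpose_mul_self hA)
  calc (orthogonalPolarFactor A)ᵀ * orthogonalPolarFactor A
      = R⁻¹ * (R * R) * R⁻¹ := by
        rw [orthogonalPolarFactor, Matrix.transpose_mul, Matrix.transpose_nonsing_inv,
          transpose_cfcSqrt, hRR, Matrix.mul_assoc, Matrix.mul_assoc, Matrix.mul_assoc]
    _ = (R⁻¹ * R) * (R * R⁻¹) := by simp only [Matrix.mul_assoc]
    _ = 1 := by rw [Matrix.nonsing_inv_mul R hR, Matrix.mul_nonsing_inv R hR, Matrix.one_mul]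

theorem conj_eq_orthogonalPolarFactor_conj {A Q : Matrix n n ℝ} (hA : IsUnit A)
    (hQ : Qᵀ * Q = 1) (hAQ : (A * Q * A⁻¹)ᵀ * (A * Q * A⁻¹) = 1) :
    A * Q * A⁻¹ = orthogonalPolarFactor A * Q * (orthogonalPolarFactor A)ᵀ := by
  set U := orthogonalPolarFactor A
  set R := CFC.sqrt (Aᵀ * A)
  have hR := (Matrix.isUnit_iff_isUnit_det R).mp (isUnit_cfcSqrt_transpose_mul_self hA)
  have hRQ : Commute R Q := by
    rw [show R = cfc NNReal.sqrt (Aᵀ * A) from CFC.sqrt_eq_cfc]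
    exact (commute_transpose_mul_self_of_conj_orthogonal hA hQ hAQ).cfc_nnreal _
  have hAinv : A⁻¹ = R⁻¹ * Uᵀ := by
    rw [← orthogonalPolarFactor_mul_cfcSqrt hA, Matrix.mul_inv_rev,
      Matrix.inv_eq_left_inv (orthogonalPolarFactor_transpose_mul_self hA)]
  calc A * Q * A⁻¹ = U * (R * Q * R⁻¹) * Uᵀ := by
        conv_lhs => rw [hAinv, ← orthogonalPolarFactor_mul_cfcSqrt hA]
        simp only [U, R, Matrix.mul_assoc]
    _ = U * Q * Uᵀ := by
        rw [hRQ.eq, Matrix.mul_assoc Q, Matrix.mul_nonsing_inv R hR, Matrix.mul_one]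

end PolarDecomposition

theorem conjugated_rotation_orthogonal_general
    (m : ℕ) (ν : ℝ → ℝ)
    (A : Matrix (Fin 2 × Fin m) (Fin 2 × Fin m) ℝ)
    (hA : IsUnit A)
    (S : ℝ → Matrix (Fin 2 × Fin m) (Fin 2 × Fin m) ℝ)
    (hS : ∀ x : ℝ, 0 ≤ x → S x = A * Qnu m ν x * A⁻¹)
    (hSorth : ∀ x : ℝ, 0 ≤ x → (S x)ᵀ * S x = 1) :
    ∃ U : Matrix (Fin 2 × Fin m) (Fin 2 × Fin m) ℝ,
      Uᵀ * U = 1 ∧ ∀ x : ℝ, 0 ≤ x → S x = U * Qnu m ν x * Uᵀ := by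
  refine ⟨orthogonalPolarFactor A, orthogonalPolarFactor_transpose_mul_self hA, fun x hx => ?_⟩
  have hconj := hSorth x hx
  rw [hS x hx] at hconj ⊢
  exact conj_eq_orthogonalPolarFactor_conj hA (Qnu_transpose_mul_self m ν x) hconj

/-- If `S x = A * Q_d^ν(x) * A⁻¹` is orthogonal for every `x ≥ 0`, where
`A` is invertible and `ν` is additive, then `S x = U * Q_d^ν(x) * Uᵀ` for some orthogonal
matrix `U`. -/
theorem conjugated_rotation_orthogonal
    (m : ℕ) (ν : ℝ → ℝ)
    (hν : ∀ x y : ℝ, ν x + ν y = ν (x + y))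
    (A : Matrix (Fin 2 × Fin m) (Fin 2 × Fin m) ℝ)
    (hA : IsUnit A)
    (S : ℝ → Matrix (Fin 2 × Fin m) (Fin 2 × Fin m) ℝ)
    (hS : ∀ x : ℝ, 0 ≤ x → S x = A * Qnu m ν x * A⁻¹)
    (hSorth : ∀ x : ℝ, 0 ≤ x → (S x)ᵀ * S x = 1) :
    ∃ U : Matrix (Fin 2 × Fin m) (Fin 2 × Fin m) ℝ,
      Uᵀ * U = 1 ∧ ∀ x : ℝ, 0 ≤ x → S x = U * Qnu m ν x * Uᵀ :=
  conjugated_rotation_orthogonal_general m ν A hA S hS hSorth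
end
end

section
/- Let V be a finite-dimensional real inner product space and let g : [0,∞) → L(V) be a semigroup satisfying the boundedness assumption. Let V = V_1 ⊕ V_2 be a decomposition into subspaces invariant under all g(x) such that g(x) restricted to V_1 is invertible for all x ≥ 0 and g(x) restricted to V_2 is zero for all x > 0. Then for every nonzero v ∈ V_1, the limit as x → 0 from the right of ‖g(x)v‖/‖v‖ equals 1. -/
/-!
On `V₁` every `g x` is invertible, so `d x = det (g x|V₁)` is a multiplicative function on
`[0, ∞)` with `0 < d x ≤ ‖g x‖ ^ m ≤ f x ^ m`, where `m = dim V₁`. Writing `1 = k x + (1 - k x)`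
with `k = ⌊1/x⌋` gives `d 1 ≤ d x ^ k * C` for a bound `C` of `d` on `[0, 1]`, hence
`d x ≥ (d 1 / C) ^ (1 / k) → 1`, and so `d x → 1` as `x → 0⁺`. The singular values of `g x|V₁`
are at most `f x` and multiply to `d x`, so the smallest one is at least `d x / f x ^ (m - 1)`;
this squeezes `‖g x v‖ / ‖v‖` between `d x / f x ^ (m - 1)` and `f x`, both tending to `1`.
-/

open scoped RealInnerProductSpace
open Module Filter Set Topology

namespace LinearMap

variable {E : Type*} [NormedAddCommGroup E] [InnerProductSpace ℝ E] [FiniteDimensional ℝ E]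

theorem IsPositive.det_mul_norm_sq_le {T : E →ₗ[ℝ] E} (hT : T.IsPositive) {M : ℝ}
    (hM : ∀ w, ⟪T w, w⟫ ≤ M * ‖w‖ ^ 2) (w : E) :
    T.det * ‖w‖ ^ 2 ≤ M ^ (finrank ℝ E - 1) * ⟪T w, w⟫ := by
  set e := hT.isSymmetric.eigenvectorBasis rfl
  set μ := hT.isSymmetric.eigenvalues rfl
  have hμ0 : ∀ i, 0 ≤ μ i := hT.nonneg_eigenvalues rfl
  have hμM : ∀ i, μ i ≤ M := fun i => by
    simpa [e, μ, real_inner_smul_left] using hM (e i)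
  have hdet : T.det = ∏ i, μ i := by
    simpa using hT.isSymmetric.det_eq_prod_eigenvalues rfl
  have hdet_le : ∀ i, T.det ≤ M ^ (finrank ℝ E - 1) * μ i := fun i => by
    rw [hdet, ← Finset.mul_prod_erase _ _ (Finset.mem_univ i), mul_comm]
    refine mul_le_mul_of_nonneg_right ?_ (hμ0 i)
    calc ∏ j ∈ Finset.univ.erase i, μ j ≤ ∏ j ∈ Finset.univ.erase i, M :=
          Finset.prod_le_prod (fun j _ => hμ0 j) (fun j _ => hμM j)
      _ = M ^ (finrank ℝ E - 1) := by simp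
  have hnorm : ‖w‖ ^ 2 = ∑ i, e.repr w i ^ 2 := by
    rw [← e.repr.norm_map, EuclideanSpace.norm_sq_eq]; simp
  have hinner : ⟪T w, w⟫ = ∑ i, μ i * e.repr w i ^ 2 := by
    rw [← e.repr.inner_map_map, PiLp.inner_apply]
    simp only [e, μ, hT.isSymmetric.eigenvectorBasis_apply_self_apply]
    refine Finset.sum_congr rfl fun i _ => ?_
    simp only [RCLike.inner_apply, conj_trivial, RCLike.ofReal_real_eq_id, id_eq]
    ring
  rw [hnorm, hinner, Finset.mul_sum, Finset.mul_sum]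
  refine Finset.sum_le_sum fun i _ => ?_
  calc T.det * e.repr w i ^ 2 ≤ M ^ (finrank ℝ E - 1) * μ i * e.repr w i ^ 2 :=
        mul_le_mul_of_nonneg_right (hdet_le i) (sq_nonneg _)
    _ = _ := by ring

end LinearMap

namespace ContinuousLinearMap

variable {E : Type*} [NormedAddCommGroup E] [InnerProductSpace ℝ E] [FiniteDimensional ℝ E]

theorem abs_det_mul_norm_le (S : E →L[ℝ] E) (v : E) :
    |S.det| * ‖v‖ ≤ ‖S‖ ^ (finrank ℝ E - 1) * ‖S v‖ := by
  set T := LinearMap.adjoint (S : E →ₗ[ℝ] E) ∘ₗ (S : E →ₗ[ℝ] E)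
  have hT : ∀ w, ⟪T w, w⟫ = ‖S w‖ ^ 2 := fun w => by
    simp [T, LinearMap.adjoint_inner_left]
  have hdet : T.det = |S.det| ^ 2 := by
    rw [← LinearMap.normDet_sq, LinearMap.normDet_eq_abs_det]; rfl
  have key := (S : E →ₗ[ℝ] E).isPositive_adjoint_comp_self.det_mul_norm_sq_le
    (M := ‖S‖ ^ 2) (fun w => by rw [hT, ← mul_pow]; gcongr; exact S.le_opNorm w) v
  rw [hdet, hT] at key
  refine le_of_sq_le_sq ?_ (by positivity)
  calc (|S.det| * ‖v‖) ^ 2 = |S.det| ^ 2 * ‖v‖ ^ 2 := mul_pow _ _ _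
    _ ≤ (‖S‖ ^ 2) ^ (finrank ℝ E - 1) * ‖S v‖ ^ 2 := key
    _ = _ := by ring

theorem abs_det_le_opNorm_pow [Nontrivial E] (S : E →L[ℝ] E) : |S.det| ≤ ‖S‖ ^ finrank ℝ E := by
  obtain ⟨v, hv⟩ := exists_ne (0 : E)
  refine le_of_mul_le_mul_right ?_ (norm_pos_iff.mpr hv)
  calc |S.det| * ‖v‖ ≤ ‖S‖ ^ (finrank ℝ E - 1) * ‖S v‖ := S.abs_det_mul_norm_le v
    _ ≤ ‖S‖ ^ (finrank ℝ E - 1) * (‖S‖ * ‖v‖) := by gcongr; exact S.le_opNorm v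
    _ = ‖S‖ ^ finrank ℝ E * ‖v‖ := by
      rw [← mul_assoc, pow_sub_one_mul finrank_pos.ne']

end ContinuousLinearMap

section MulOnNonneg

variable {d : ℝ → ℝ}

theorem nonneg_of_map_add_eq_mul (hmul : ∀ x y, 0 ≤ x → 0 ≤ y → d (x + y) = d x * d y)
    {x : ℝ} (hx : 0 ≤ x) : 0 ≤ d x := by
  have := hmul (x / 2) (x / 2) (by positivity) (by positivity)
  rw [add_halves] at this
  exact this ▸ mul_self_nonneg _

theorem map_natCast_mul_eq_pow (hmul : ∀ x y, 0 ≤ x → 0 ≤ y → d (x + y) = d x * d y)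
    (h0 : d 0 = 1) (k : ℕ) {x : ℝ} (hx : 0 ≤ x) : d (k * x) = d x ^ k := by
  induction k with
  | zero => simpa using h0
  | succ k ih =>
    rw [Nat.cast_succ, add_one_mul, hmul _ _ (by positivity) hx, ih, pow_succ]

theorem map_one_le_pow_floor_inv_mul (hmul : ∀ x y, 0 ≤ x → 0 ≤ y → d (x + y) = d x * d y)
    (h0 : d 0 = 1) {C : ℝ} (hC : ∀ y ∈ Icc (0 : ℝ) 1, d y ≤ C) {x : ℝ} (hx : x ∈ Ioc 0 1) :
    d 1 ≤ d x ^ ⌊x⁻¹⌋₊ * C := by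
  set k := ⌊x⁻¹⌋₊
  have hkx₀ : 0 ≤ k * x := mul_nonneg k.cast_nonneg hx.1.le
  have hkx : k * x ≤ 1 := by
    calc k * x ≤ x⁻¹ * x :=
          mul_le_mul_of_nonneg_right (Nat.floor_le (inv_nonneg.mpr hx.1.le)) hx.1.le
      _ = 1 := inv_mul_cancel₀ hx.1.ne'
  calc d 1 = d (k * x) * d (1 - k * x) := by
        rw [← hmul _ _ hkx₀ (by linarith), add_sub_cancel]
    _ ≤ d x ^ k * C := by
      rw [map_natCast_mul_eq_pow hmul h0 k hx.1.le]
      exact mul_le_mul_of_nonneg_left (hC _ ⟨by linarith, by linarith⟩)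
        (pow_nonneg (nonneg_of_map_add_eq_mul hmul hx.1.le) k)

theorem tendsto_rpow_inv_natFloor_inv {c : ℝ} (hc : c ≠ 0) :
    Tendsto (fun x : ℝ => c ^ (⌊x⁻¹⌋₊ : ℝ)⁻¹) (𝓝[>] 0) (𝓝 1) := by
  have hk : Tendsto (fun x : ℝ => (⌊x⁻¹⌋₊ : ℝ)⁻¹) (𝓝[>] 0) (𝓝 0) :=
    tendsto_inv_atTop_zero.comp <| tendsto_natCast_atTop_atTop.comp <|
      tendsto_nat_floor_atTop.comp tendsto_inv_nhdsGT_zero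
  simpa [Function.comp_def] using ((Real.continuousAt_const_rpow hc).tendsto.comp hk)

theorem tendsto_nhdsGT_zero_of_map_add_eq_mul {F : ℝ → ℝ}
    (hmul : ∀ x y, 0 ≤ x → 0 ≤ y → d (x + y) = d x * d y) (h1 : d 1 ≠ 0)
    (hbdd : BddAbove (d '' Icc 0 1)) (hle : ∀ᶠ x in 𝓝[>] 0, d x ≤ F x)
    (hF : Tendsto F (𝓝[>] 0) (𝓝 1)) :
    Tendsto d (𝓝[>] 0) (𝓝 1) := by
  have h0 : d 0 = 1 := by
    have := hmul 0 1 le_rfl zero_le_one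
    rw [zero_add] at this
    exact (mul_eq_right₀ h1).mp this.symm
  have h1pos : 0 < d 1 := (nonneg_of_map_add_eq_mul hmul zero_le_one).lt_of_ne' h1
  obtain ⟨C, hC⟩ := hbdd
  have hC' : ∀ y ∈ Icc (0 : ℝ) 1, d y ≤ C := fun y hy => hC (mem_image_of_mem d hy)
  have hCpos : 0 < C := h1pos.trans_le (hC' 1 ⟨zero_le_one, le_rfl⟩)
  have hlow : ∀ x ∈ Ioc (0 : ℝ) 1, (d 1 / C) ^ (⌊x⁻¹⌋₊ : ℝ)⁻¹ ≤ d x := fun x hx => by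
    have hk : (0 : ℝ) < ⌊x⁻¹⌋₊ := Nat.cast_pos.mpr <| Nat.floor_pos.mpr <|
      (one_le_inv₀ hx.1).mpr hx.2
    rw [Real.rpow_inv_le_iff_of_pos (by positivity) (nonneg_of_map_add_eq_mul hmul hx.1.le) hk,
      Real.rpow_natCast, div_le_iff₀ hCpos]
    exact map_one_le_pow_floor_inv_mul hmul h0 hC' hx
  refine tendsto_of_tendsto_of_tendsto_of_le_of_le' (tendsto_rpow_inv_natFloor_inv
    (div_pos h1pos hCpos).ne') hF ?_ hle
  filter_upwards [Ioc_mem_nhdsGT zero_lt_one] with x hx using hlow x hx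

end MulOnNonneg

section Semigroup

variable {E : Type*} [NormedAddCommGroup E] [InnerProductSpace ℝ E] [FiniteDimensional ℝ E]
  {G : ℝ → E →L[ℝ] E} {f : ℝ → ℝ}

theorem tendsto_det_nhdsGT_zero_of_semigroup [Nontrivial E]
    (hG : ∀ x y, 0 ≤ x → 0 ≤ y → G (x + y) = G x * G y) (hG1 : Function.Injective (G 1))
    (hGf : ∀ x, 0 ≤ x → ‖G x‖ ≤ f x) (hf : Tendsto f (𝓝[>] 0) (𝓝 1))
    (hfbdd : BddAbove (f '' Icc 0 1)) :
    Tendsto (fun x => (G x).det) (𝓝[>] 0) (𝓝 1) := by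
  have hdet_le : ∀ x, 0 ≤ x → (G x).det ≤ f x ^ finrank ℝ E := fun x hx =>
    (le_abs_self _).trans <| (G x).abs_det_le_opNorm_pow.trans <|
      pow_le_pow_left₀ (norm_nonneg _) (hGf x hx) _
  refine tendsto_nhdsGT_zero_of_map_add_eq_mul (F := fun x => f x ^ finrank ℝ E)
    (fun x y hx hy => by rw [hG x y hx hy]; exact LinearMap.det_comp _ _) ?_ ?_ ?_ ?_
  · exact LinearMap.det_eq_zero_iff_ker_ne_bot.not_left.mpr (LinearMap.ker_eq_bot.mpr hG1)
  · obtain ⟨C, hC⟩ := hfbdd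
    refine ⟨C ^ finrank ℝ E, forall_mem_image.mpr fun x hx => (hdet_le x hx.1).trans ?_⟩
    exact pow_le_pow_left₀ ((norm_nonneg _).trans (hGf x hx.1)) (hC (mem_image_of_mem f hx)) _
  · filter_upwards [self_mem_nhdsWithin] with x hx using hdet_le x (le_of_lt hx)
  · simpa using hf.pow (finrank ℝ E)

theorem tendsto_norm_apply_div_norm_of_semigroup
    (hG : ∀ x y, 0 ≤ x → 0 ≤ y → G (x + y) = G x * G y) (hG1 : Function.Injective (G 1))
    (hGf : ∀ x, 0 ≤ x → ‖G x‖ ≤ f x) (hf : Tendsto f (𝓝[>] 0) (𝓝 1))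
    (hfbdd : BddAbove (f '' Icc 0 1)) {v : E} (hv : v ≠ 0) :
    Tendsto (fun x => ‖G x v‖ / ‖v‖) (𝓝[>] 0) (𝓝 1) := by
  have : Nontrivial E := ⟨v, 0, hv⟩
  have hv' : 0 < ‖v‖ := norm_pos_iff.mpr hv
  have hlow : Tendsto (fun x => (G x).det / f x ^ (finrank ℝ E - 1)) (𝓝[>] 0) (𝓝 1) := by
    have := (tendsto_det_nhdsGT_zero_of_semigroup hG hG1 hGf hf hfbdd).div
      (hf.pow (finrank ℝ E - 1)) (by simp)
    rwa [one_pow, div_one] at this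
  refine tendsto_of_tendsto_of_tendsto_of_le_of_le' hlow hf ?_ ?_
  · filter_upwards [self_mem_nhdsWithin, hf.eventually (eventually_gt_nhds one_pos)]
      with x hx hfx
    rw [div_le_div_iff₀ (pow_pos hfx _) hv']
    calc (G x).det * ‖v‖ ≤ ‖G x‖ ^ (finrank ℝ E - 1) * ‖G x v‖ :=
          (mul_le_mul_of_nonneg_right (le_abs_self _) hv'.le).trans ((G x).abs_det_mul_norm_le v)
      _ ≤ f x ^ (finrank ℝ E - 1) * ‖G x v‖ := by
          gcongr
          exact hGf x (le_of_lt hx)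
      _ = ‖G x v‖ * f x ^ (finrank ℝ E - 1) := mul_comm _ _
  · filter_upwards [self_mem_nhdsWithin] with x hx
    rw [div_le_iff₀ hv']
    exact ((G x).le_opNorm v).trans (mul_le_mul_of_nonneg_right (hGf x (le_of_lt hx)) hv'.le)

end Semigroup

section Restrict

variable {V : Type*} [NormedAddCommGroup V] [NormedSpace ℝ V] {g : ℝ → V →L[ℝ] V}
  {p : Submodule ℝ V}

/-- Clamping at `0` makes the restriction defined for every `x`, although `p` is only assumed
invariant under `g x` for `x ≥ 0`. -/
noncomputable def restrictOfNonneg (g : ℝ → V →L[ℝ] V) (p : Submodule ℝ V)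
    (hp : ∀ x, 0 ≤ x → ∀ v ∈ p, g x v ∈ p) (x : ℝ) : p →L[ℝ] p :=
  ((g (max x 0)).comp p.subtypeL).codRestrict p fun w => hp _ (le_max_right x 0) w w.2

variable (hp : ∀ x, 0 ≤ x → ∀ v ∈ p, g x v ∈ p)

theorem coe_restrictOfNonneg_apply {x : ℝ} (hx : 0 ≤ x) (w : p) :
    (restrictOfNonneg g p hp x w : V) = g x w := by
  simp [restrictOfNonneg, max_eq_left hx]

theorem restrictOfNonneg_add (hg : ∀ x y, 0 ≤ x → 0 ≤ y → g (x + y) = g x * g y) {x y : ℝ}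
    (hx : 0 ≤ x) (hy : 0 ≤ y) :
    restrictOfNonneg g p hp (x + y) = restrictOfNonneg g p hp x * restrictOfNonneg g p hp y := by
  ext w
  simp [coe_restrictOfNonneg_apply hp, hx, hy, add_nonneg hx hy, hg x y hx hy]

theorem norm_restrictOfNonneg_le {x : ℝ} (hx : 0 ≤ x) : ‖restrictOfNonneg g p hp x‖ ≤ ‖g x‖ :=
  ContinuousLinearMap.opNorm_le_bound _ (norm_nonneg _) fun w => by
    rw [Submodule.coe_norm, coe_restrictOfNonneg_apply hp hx]
    exact (g x).le_opNorm w

theorem injective_restrictOfNonneg {x : ℝ} (hx : 0 ≤ x)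
    (hker : Disjoint (LinearMap.ker (g x : V →ₗ[ℝ] V)) p) :
    Function.Injective (restrictOfNonneg g p hp x) := by
  refine (injective_iff_map_eq_zero _).mpr fun w hw => Subtype.ext ?_
  refine Submodule.disjoint_def.mp hker w ?_ w.2
  rw [LinearMap.mem_ker, ContinuousLinearMap.coe_coe, ← coe_restrictOfNonneg_apply hp hx, hw]
  rfl

end Restrict

theorem norm_limit_one_general
    {V : Type*} [NormedAddCommGroup V] [InnerProductSpace ℝ V] [FiniteDimensional ℝ V]
    (g : ℝ → V →L[ℝ] V)
    (hgadd : ∀ x y : ℝ, 0 ≤ x → 0 ≤ y → g (x + y) = g x * g y)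
    (f : ℝ → ℝ)
    (hf0 : f 0 = 1)
    (hf_rc : ContinuousWithinAt f (Set.Ici 0) 0)
    (hf_loc : ∀ K : Set ℝ, IsCompact K → ∃ C : ℝ, ∀ x ∈ K, |f x| ≤ C)
    (hgf : ∀ x : ℝ, 0 ≤ x → ‖g x‖ ≤ f x)
    (V₁ : Submodule ℝ V)
    (hinv₁ : ∀ x : ℝ, 0 ≤ x → ∀ v ∈ V₁, g x v ∈ V₁)
    (hbij : ∀ x : ℝ, 0 ≤ x →
      Submodule.map (g x : V →ₗ[ℝ] V) V₁ = V₁ ∧ Disjoint (LinearMap.ker (g x : V →ₗ[ℝ] V)) V₁) :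
    ∀ v ∈ V₁, v ≠ 0 →
      Filter.Tendsto (fun x : ℝ => ‖g x v‖ / ‖v‖)
        (nhdsWithin 0 (Set.Ioi 0)) (nhds 1) := by
  intro v hv hv0
  have hf : Tendsto f (𝓝[>] 0) (𝓝 1) :=
    hf0 ▸ hf_rc.tendsto.mono_left (nhdsWithin_mono _ Ioi_subset_Ici_self)
  have hfbdd : BddAbove (f '' Icc 0 1) := by
    obtain ⟨C, hC⟩ := hf_loc _ isCompact_Icc
    exact ⟨C, forall_mem_image.mpr fun x hx => (le_abs_self _).trans (hC x hx)⟩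
  have hlim := tendsto_norm_apply_div_norm_of_semigroup
    (fun x y hx hy => restrictOfNonneg_add hinv₁ hgadd hx hy)
    (injective_restrictOfNonneg hinv₁ zero_le_one (hbij 1 zero_le_one).2)
    (fun x hx => (norm_restrictOfNonneg_le hinv₁ hx).trans (hgf x hx)) hf hfbdd
    (v := ⟨v, hv⟩) (by simpa using hv0)
  refine hlim.congr' ?_
  filter_upwards [self_mem_nhdsWithin] with x hx
  rw [Submodule.coe_norm, coe_restrictOfNonneg_apply hinv₁ (le_of_lt hx)]
  rfl

/-- Under the boundedness assumption, on the invertible part `V₁` of the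
decomposition `V = V₁ ⊕ V₂` (with `g` vanishing on `V₂` for `x > 0`), for every nonzero
`v ∈ V₁` the ratio `‖g x v‖ / ‖v‖` tends to `1` as `x → 0⁺`. -/
theorem norm_limit_one
    {V : Type*} [NormedAddCommGroup V] [InnerProductSpace ℝ V] [FiniteDimensional ℝ V]
    (g : ℝ → V →L[ℝ] V)
    (hg0 : g 0 = 1)
    (hgadd : ∀ x y : ℝ, 0 ≤ x → 0 ≤ y → g (x + y) = g x * g y)
    (f : ℝ → ℝ)
    (hf0 : f 0 = 1)
    (hf_rc : ContinuousWithinAt f (Set.Ici 0) 0)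
    (hf_loc : ∀ K : Set ℝ, IsCompact K → ∃ C : ℝ, ∀ x ∈ K, |f x| ≤ C)
    (hgf : ∀ x : ℝ, 0 ≤ x → ‖g x‖ ≤ f x)
    (V₁ V₂ : Submodule ℝ V)
    (hcompl : IsCompl V₁ V₂)
    (hinv₁ : ∀ x : ℝ, 0 ≤ x → ∀ v ∈ V₁, g x v ∈ V₁)
    (hinv₂ : ∀ x : ℝ, 0 ≤ x → ∀ v ∈ V₂, g x v ∈ V₂)
    (hbij : ∀ x : ℝ, 0 ≤ x →
      Submodule.map (g x : V →ₗ[ℝ] V) V₁ = V₁ ∧ Disjoint (LinearMap.ker (g x : V →ₗ[ℝ] V)) V₁)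
    (hzero : ∀ x : ℝ, 0 < x → ∀ v ∈ V₂, g x v = 0) :
    ∀ v ∈ V₁, v ≠ 0 →
      Filter.Tendsto (fun x : ℝ => ‖g x v‖ / ‖v‖)
        (nhdsWithin 0 (Set.Ioi 0)) (nhds 1) :=
  norm_limit_one_general g hgadd f hf0 hf_rc hf_loc hgf V₁ hinv₁ hbij
end

section
/- Let V be a finite-dimensional real inner product space and let g : [0,∞) → L(V) be a semigroup satisfying the boundedness assumption. Suppose V = V_1 ⊕ V_2 is a decomposition into subspaces invariant under all g(x) such that g(x) restricted to V_1 is invertible for all x ≥ 0 and g(x) restricted to V_2 is zero for all x > 0. Then V_1 and V_2 are orthogonal: ⟨v, u⟩ = 0 for all v ∈ V_1 and u ∈ V_2. -/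
/-!
For `x > 0`, `g x` kills `V₂`, so on `V₁` it factors through the orthogonal projection `T` onto
`V₂ᗮ`: `‖g x v‖ ≤ f x * ‖T v‖`. Hence `g x` maps `S = {v ∈ V₁ | ‖T v‖ ≤ 1}` into the ball of
radius `f x`, and comparing volumes gives `|det (g x on V₁)| ≤ f x ^ k * vol B / vol S`, where `B`
is the unit ball of `V₁`, contained in `S`. The left side is positive and multiplicative in `x`
while `f x → 1`, which forces `vol S ≤ vol B`. A contraction whose unit-ball preimage has no more
volume than the ball is an isometry, so `T` is the identity on `V₁`, i.e. `V₁ ⊆ V₂ᗮ`.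
-/

open Filter Function Metric MeasureTheory Module Set Topology

section Multiplicative

variable {D : ℝ → ℝ} (hD_mul : ∀ x y, 0 < x → 0 < y → D (x + y) = D x * D y)
include hD_mul

lemma apply_succ_mul_of_multiplicative {t : ℝ} (ht : 0 < t) (n : ℕ) :
    D ((n + 1) * t) = D t ^ (n + 1) := by
  induction n with
  | zero => simp
  | succ n ih =>
    rw [Nat.cast_succ, add_mul _ 1, one_mul, hD_mul _ _ (by positivity) ht, ih, pow_succ _ (n + 1)]

/-- Otherwise `D x = D (x / n) ^ n ≤ r ^ n → 0`. -/
lemma one_le_of_multiplicative_of_eventually_le (hD_pos : ∀ x, 0 < x → 0 < D x) {r : ℝ}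
    (hDr : ∀ᶠ x in 𝓝[>] 0, D x ≤ r) : 1 ≤ r := by
  by_contra! hr
  obtain ⟨ε, hε, hεr⟩ := mem_nhdsGT_iff_exists_Ioo_subset.mp hDr
  have hε : (0 : ℝ) < ε := hε
  have hx : ε / 2 ∈ Ioo 0 ε := ⟨by positivity, by linarith⟩
  have hr₀ : 0 ≤ r := (hD_pos _ hx.1).le.trans (hεr hx)
  have hDx : ∀ n : ℕ, D (ε / 2) ≤ r ^ (n + 1) := fun n ↦ by
    have ht : ε / 2 / (n + 1) ∈ Ioo 0 ε :=
      ⟨by positivity, (div_le_self hx.1.le (by linarith [n.cast_nonneg (α := ℝ)])).trans_lt hx.2⟩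
    calc D (ε / 2) = D (ε / 2 / (n + 1)) ^ (n + 1) := by
          rw [← apply_succ_mul_of_multiplicative hD_mul ht.1, mul_div_cancel₀ _ (by positivity)]
      _ ≤ r ^ (n + 1) := pow_le_pow_left₀ (hD_pos _ ht.1).le (hεr ht) _
  have hlim : Tendsto (fun n : ℕ ↦ r ^ (n + 1)) atTop (𝓝 0) :=
    (tendsto_pow_atTop_nhds_zero_of_lt_one hr₀ hr).comp (tendsto_add_atTop_nat 1)
  exact (hD_pos _ hx.1).not_ge (ge_of_tendsto' hlim hDx)

lemma one_le_of_multiplicative_of_tendsto (hD_pos : ∀ x, 0 < x → 0 < D x) {c : ℝ → ℝ} {L : ℝ}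
    (hc : Tendsto c (𝓝[>] 0) (𝓝 L)) (hDc : ∀ᶠ x in 𝓝[>] 0, D x ≤ c x) : 1 ≤ L :=
  le_of_forall_gt_imp_ge_of_dense fun r hr ↦
    one_le_of_multiplicative_of_eventually_le hD_mul hD_pos <| by
      filter_upwards [hDc, hc (Iio_mem_nhds hr)] with x hx hxr using hx.trans hxr.le

end Multiplicative

section Volume

variable {E F : Type*} [NormedAddCommGroup E] [NormedSpace ℝ E] [FiniteDimensional ℝ E]
  [MeasurableSpace E] [BorelSpace E] (μ : Measure E) [μ.IsAddHaarMeasure]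
  [NormedAddCommGroup F] [NormedSpace ℝ F]

lemma abs_det_mul_measureReal_le (A : E →ₗ[ℝ] E) {s : Set E} {r : ℝ} (hr : 0 ≤ r)
    (hAs : A '' s ⊆ closedBall 0 r) :
    |LinearMap.det A| * μ.real s ≤ r ^ finrank ℝ E * μ.real (closedBall 0 1) := by
  have hle : ENNReal.ofReal |LinearMap.det A| * μ s
      ≤ ENNReal.ofReal (r ^ finrank ℝ E) * μ (closedBall 0 1) := by
    rw [← μ.addHaar_image_linearMap, ← μ.addHaar_closedBall' 0 hr]
    exact measure_mono hAs
  have hfin : ENNReal.ofReal (r ^ finrank ℝ E) * μ (closedBall 0 1) ≠ ⊤ :=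
    ENNReal.mul_ne_top ENNReal.ofReal_ne_top measure_closedBall_lt_top.ne
  simpa [measureReal_def, ENNReal.toReal_mul, abs_nonneg, hr] using ENNReal.toReal_mono hfin hle

/-- Otherwise the open set `{‖T v‖ < 1 < ‖v‖}` would be a nonempty null set. -/
lemma norm_apply_eq_of_measure_preimage_closedBall_le (T : E →ₗ[ℝ] F) (hT : ∀ v, ‖T v‖ ≤ ‖v‖)
    (hμ : μ (T ⁻¹' closedBall 0 1) ≤ μ (closedBall 0 1)) (v : E) : ‖T v‖ = ‖v‖ := by
  refine (hT v).antisymm (not_lt.mp fun hlt ↦ ?_)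
  have hsub : closedBall (0 : E) 1 ⊆ T ⁻¹' closedBall 0 1 := fun w hw ↦ by
    simpa using (hT w).trans (mem_closedBall_zero_iff.mp hw)
  have hnull : μ (T ⁻¹' closedBall 0 1 \ closedBall 0 1) = 0 := by
    rw [measure_sdiff hsub measurableSet_closedBall.nullMeasurableSet measure_closedBall_lt_top.ne]
    exact tsub_eq_zero_of_le hμ
  set U : Set E := {w | ‖T w‖ < 1} ∩ {w | 1 < ‖w‖}
  have hU_open : IsOpen U :=
    (isOpen_lt (continuous_norm.comp (LinearMap.continuous_of_finiteDimensional T))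
      continuous_const).inter (isOpen_lt continuous_const continuous_norm)
  have hU_sub : U ⊆ T ⁻¹' closedBall 0 1 \ closedBall 0 1 := fun w hw ↦ by
    simpa using ⟨hw.1.le, hw.2⟩
  have hU_ne : U.Nonempty := by
    have hsum : 0 < ‖T v‖ + ‖v‖ := by linarith [norm_nonneg (T v)]
    have hs : 0 < 2 / (‖T v‖ + ‖v‖) := by positivity
    refine ⟨(2 / (‖T v‖ + ‖v‖)) • v, ?_, ?_⟩ <;>
      simp only [mem_ofPred_eq, map_smul, norm_smul, Real.norm_eq_abs, abs_of_pos hs,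
        div_mul_eq_mul_div, div_lt_one hsum, one_lt_div hsum] <;> linarith
  exact (hU_open.measure_pos μ hU_ne).ne' (measure_mono_null hU_sub hnull)

end Volume

theorem norm_apply_eq_of_semigroup_le {E F : Type*} [NormedAddCommGroup E] [NormedSpace ℝ E]
    [FiniteDimensional ℝ E] [NormedAddCommGroup F] [NormedSpace ℝ F]
    (T : E →ₗ[ℝ] F) (hT_inj : Injective T) (hT : ∀ v, ‖T v‖ ≤ ‖v‖) (A : ℝ → E →ₗ[ℝ] E)
    (hA_det : ∀ x, 0 < x → LinearMap.det (A x) ≠ 0)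
    (hA_add : ∀ x y, 0 < x → 0 < y → A (x + y) = A x ∘ₗ A y) (c : ℝ → ℝ)
    (hc : Tendsto c (𝓝[>] 0) (𝓝 1)) (hc_nonneg : ∀ x, 0 < x → 0 ≤ c x)
    (hAT : ∀ x, 0 < x → ∀ v, ‖A x v‖ ≤ c x * ‖T v‖) (v : E) : ‖T v‖ = ‖v‖ := by
  borelize E
  let μ : Measure E := Measure.addHaar
  set S := T ⁻¹' closedBall 0 1
  set B := closedBall (0 : E) 1
  have hBS : B ⊆ S := fun w hw ↦ by simpa [S] using (hT w).trans (mem_closedBall_zero_iff.mp hw)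
  obtain ⟨K, -, hK⟩ := T.exists_antilipschitzWith (LinearMap.ker_eq_bot.mpr hT_inj)
  have hS_fin : μ S ≠ ⊤ := (hK.isBounded_preimage isBounded_closedBall).measure_lt_top.ne
  have hB_pos : 0 < μ.real B :=
    ENNReal.toReal_pos (measure_closedBall_pos μ 0 one_pos).ne' measure_closedBall_lt_top.ne
  have hS_pos : 0 < μ.real S := hB_pos.trans_le (measureReal_mono hBS hS_fin)
  have hvol (x : ℝ) (hx : 0 < x) :
      |LinearMap.det (A x)| ≤ c x ^ finrank ℝ E * (μ.real B / μ.real S) := by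
    rw [← mul_div_assoc, le_div_iff₀ hS_pos]
    refine abs_det_mul_measureReal_le μ (A x) (hc_nonneg x hx) ?_
    rintro _ ⟨w, hw, rfl⟩
    simpa using (hAT x hx w).trans (mul_le_of_le_one_right (hc_nonneg x hx)
      (by simpa [S] using hw))
  have hratio : 1 ≤ μ.real B / μ.real S := by
    refine one_le_of_multiplicative_of_tendsto (D := fun x ↦ |LinearMap.det (A x)|)
      (fun x y hx hy ↦ by simp [hA_add x y hx hy, LinearMap.det_comp, abs_mul])
      (fun x hx ↦ abs_pos.mpr (hA_det x hx)) ?_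
      (eventually_nhdsWithin_of_forall fun x hx ↦ hvol x hx)
    simpa using (hc.pow (finrank ℝ E)).mul_const (μ.real B / μ.real S)
  refine norm_apply_eq_of_measure_preimage_closedBall_le μ T hT ?_ v
  rw [one_le_div hS_pos, measureReal_def, measureReal_def] at hratio
  exact (ENNReal.toReal_le_toReal hS_fin measure_closedBall_lt_top.ne).mp hratio

lemma LinearMap.det_restrict_ne_zero {M : Type*} [AddCommGroup M] [Module ℝ M]
    [FiniteDimensional ℝ M] {f : M →ₗ[ℝ] M} {p : Submodule ℝ M}
    (hf : ∀ v ∈ p, f v ∈ p) (hker : Disjoint (LinearMap.ker f) p) :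
    LinearMap.det (f.restrict hf) ≠ 0 := by
  have : LinearMap.ker (f.restrict hf) = ⊥ := LinearMap.ker_eq_bot'.mpr fun w hw ↦ Subtype.ext <|
    Submodule.disjoint_def.mp hker _ (by simpa using congr_arg Subtype.val hw) w.2
  exact (LinearMap.isUnit_det _ ((LinearMap.isUnit_iff_ker_eq_bot _).mpr this)).ne_zero

lemma injective_starProjection_orthogonal_comp_subtype {V : Type*} [NormedAddCommGroup V]
    [InnerProductSpace ℝ V] {V₁ V₂ : Submodule ℝ V} [V₂.HasOrthogonalProjection]
    (h : Disjoint V₁ V₂) :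
    Injective ((V₂ᗮ.starProjection : V →ₗ[ℝ] V) ∘ₗ V₁.subtype) := by
  refine (injective_iff_map_eq_zero _).mpr fun w hw ↦ Subtype.ext ?_
  have hw : (w : V) = V₂.starProjection w := by simpa [sub_eq_zero] using hw
  exact Submodule.disjoint_def.mp h _ w.2 (hw ▸ V₂.starProjection_apply_mem _)

theorem decomposition_orthogonal_general
    {V : Type*} [NormedAddCommGroup V] [InnerProductSpace ℝ V] [FiniteDimensional ℝ V]
    (g : ℝ → V →L[ℝ] V)
    (hgadd : ∀ x y : ℝ, 0 ≤ x → 0 ≤ y → g (x + y) = g x * g y)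
    (f : ℝ → ℝ)
    (hf0 : f 0 = 1)
    (hf_rc : ContinuousWithinAt f (Set.Ici 0) 0)
    (hgf : ∀ x : ℝ, 0 ≤ x → ‖g x‖ ≤ f x)
    (V₁ V₂ : Submodule ℝ V)
    (hcompl : IsCompl V₁ V₂)
    (hinv₁ : ∀ x : ℝ, 0 ≤ x → ∀ v ∈ V₁, g x v ∈ V₁)
    (hbij : ∀ x : ℝ, 0 ≤ x →
      Submodule.map (g x : V →ₗ[ℝ] V) V₁ = V₁ ∧ Disjoint (LinearMap.ker (g x : V →ₗ[ℝ] V)) V₁)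
    (hzero : ∀ x : ℝ, 0 < x → ∀ v ∈ V₂, g x v = 0) :
    ∀ v ∈ V₁, ∀ u ∈ V₂, (inner ℝ v u : ℝ) = 0 := by
  let T : V₁ →ₗ[ℝ] V := (V₂ᗮ.starProjection : V →ₗ[ℝ] V) ∘ₗ V₁.subtype
  have hT_sub (w : V₁) : (w : V) - T w ∈ V₂ := by simp [T]
  -- `max x 0` only makes `A` total; it is evaluated at `x > 0` alone.
  let A (x : ℝ) : V₁ →ₗ[ℝ] V₁ :=
    (g (max x 0) : V →ₗ[ℝ] V).restrict (hinv₁ _ (le_max_right x 0))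
  have hA {x : ℝ} (hx : 0 < x) (w : V₁) : (A x w : V) = g x w := by simp [A, max_eq_left hx.le]
  have hAT {x : ℝ} (hx : 0 < x) (w : V₁) : ‖A x w‖ ≤ f x * ‖T w‖ := by
    have hgT : g x w = g x (T w) := by
      rw [← sub_eq_zero, ← map_sub]; exact hzero x hx _ (hT_sub w)
    rw [← Submodule.norm_coe, hA hx, hgT]
    exact (g x).le_of_opNorm_le (hgf x hx.le) _
  intro v hv u hu
  refine Submodule.inner_left_of_mem_orthogonal hu ((V₂ᗮ.mem_iff_norm_starProjection v).mpr ?_)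
  refine norm_apply_eq_of_semigroup_le T
    (injective_starProjection_orthogonal_comp_subtype hcompl.disjoint)
    (fun w ↦ V₂ᗮ.norm_starProjection_apply_le w) A
    (fun x _ ↦ LinearMap.det_restrict_ne_zero _ (hbij _ (le_max_right x 0)).2) (fun x y hx hy ↦ ?_)
    f ?_ (fun x hx ↦ (norm_nonneg _).trans (hgf x hx.le)) (fun x hx ↦ hAT hx) ⟨v, hv⟩
  · ext w
    simp [hA (add_pos hx hy), hA hx, hA hy, hgadd x y hx.le hy.le]
  · simpa [hf0] using hf_rc.tendsto.mono_left (nhdsWithin_mono 0 Ioi_subset_Ici_self)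

/-- Under the boundedness assumption, the invertible part `V₁` and the
degenerate part `V₂` of the decomposition are orthogonal. -/
theorem decomposition_orthogonal
    {V : Type*} [NormedAddCommGroup V] [InnerProductSpace ℝ V] [FiniteDimensional ℝ V]
    (g : ℝ → V →L[ℝ] V)
    (hg0 : g 0 = 1)
    (hgadd : ∀ x y : ℝ, 0 ≤ x → 0 ≤ y → g (x + y) = g x * g y)
    (f : ℝ → ℝ)
    (hf0 : f 0 = 1)
    (hf_rc : ContinuousWithinAt f (Set.Ici 0) 0)
    (hf_loc : ∀ K : Set ℝ, IsCompact K → ∃ C : ℝ, ∀ x ∈ K, |f x| ≤ C)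
    (hgf : ∀ x : ℝ, 0 ≤ x → ‖g x‖ ≤ f x)
    (V₁ V₂ : Submodule ℝ V)
    (hcompl : IsCompl V₁ V₂)
    (hinv₁ : ∀ x : ℝ, 0 ≤ x → ∀ v ∈ V₁, g x v ∈ V₁)
    (hinv₂ : ∀ x : ℝ, 0 ≤ x → ∀ v ∈ V₂, g x v ∈ V₂)
    (hbij : ∀ x : ℝ, 0 ≤ x →
      Submodule.map (g x : V →ₗ[ℝ] V) V₁ = V₁ ∧ Disjoint (LinearMap.ker (g x : V →ₗ[ℝ] V)) V₁)
    (hzero : ∀ x : ℝ, 0 < x → ∀ v ∈ V₂, g x v = 0) :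
    ∀ v ∈ V₁, ∀ u ∈ V₂, (inner ℝ v u : ℝ) = 0 :=
  decomposition_orthogonal_general g hgadd f hf0 hf_rc hgf V₁ V₂ hcompl hinv₁ hbij hzero
end
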